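/- arXiv:1504.04424 — 5 statements merged into one kernel-verified Lean document; each statement's English description precedes it below -/
import Mathlib

section
/- Let V be a word over any alphabet, let Σ be a finite alphabet with q ≥ 2 letters, and let W_n ∈ Σ^n be chosen uniformly at random. Then V is doubled if and only if lim_{n→∞} E(δ(V,W_n)) = 0. -/
open Filter Asymptotics

/-- The substring `W[i,j]` of `W`: the `j - i` consecutive letters of `W`
beginning with the `(i+1)`-th. -/
def subword {β : Type*} (W : List β) (i j : ℕ) : List β :=
  (W.drop i).take (j - i)

/-- `W` is an instance of `V` provided `W = φ(V)` for some nonerasing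
homomorphism `φ`, i.e. a map on letters (no letter mapping to the empty word)
extended by concatenation. -/
def IsInstance {α β : Type*} (V : List α) (W : List β) : Prop :=
  ∃ φ : α → List β, (∀ a, φ a ≠ []) ∧ W = (V.map φ).flatten

/-- A word is doubled provided every letter occurring in it occurs at least twice. -/
def Doubled {α : Type*} [DecidableEq α] (V : List α) : Prop :=
  ∀ a ∈ V, 2 ≤ V.count a

open Classical in
/-- `density V W` is the proportion of the `C(|W|+1, 2)` substrings of `W`
(indexed by pairs `(i,j)` with `0 ≤ i < j ≤ |W|`) that are instances of `V`. -/
noncomputable def density {α β : Type*} (V : List α) (W : List β) : ℝ :=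
  (((Finset.range (W.length + 1) ×ˢ Finset.range (W.length + 1)).filter
      (fun p => p.1 < p.2 ∧ IsInstance V (subword W p.1 p.2))).card : ℝ) /
    (Nat.choose (W.length + 1) 2)

/-- The expected density of `V` in a word of length `n` chosen uniformly at
random over the alphabet `σ` (words of length `n` being encoded as `Fin n → σ`). -/
noncomputable def expDensity {α : Type*} (V : List α) (σ : Type*) [Fintype σ] (n : ℕ) : ℝ :=
  (∑ w : Fin n → σ, density V (List.ofFn w)) / (Fintype.card σ : ℝ) ^ n

/-- `homCount V W` counts the encounters of `V` in `W`: triples `(a, b, φ)`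
where `φ` is a nonerasing homomorphism from the letters of `V` with
`W[a,b] = φ(V)`. -/
noncomputable def homCount {α σ : Type*} (V : List α) (W : List σ) : ℕ :=
  Set.ncard {t : ℕ × ℕ × ({a : α // a ∈ V} → List σ) |
    t.1 < t.2.1 ∧ t.2.1 ≤ W.length ∧ (∀ a, t.2.2 a ≠ []) ∧
    subword W t.1 t.2.1 = (V.attach.map t.2.2).flatten}

/-- Expected number of encounters of `V` in a uniformly random word of length `n`. -/
noncomputable def expHom {α : Type*} (V : List α) (σ : Type*) [Fintype σ] (n : ℕ) : ℝ :=
  (∑ w : Fin n → σ, (homCount V (List.ofFn w) : ℝ)) / (Fintype.card σ : ℝ) ^ n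

/-- `instProb V σ m` is the proportion of words in `σ^m` that are instances of `V`. -/
noncomputable def instProb {α : Type*} (V : List α) (σ : Type*) [Fintype σ] (m : ℕ) : ℝ :=
  (Nat.card {w : Fin m → σ // IsInstance V (List.ofFn w)} : ℝ) / (Fintype.card σ : ℝ) ^ m

/-- The variance of the density of `V` in a uniformly random word of length `n`. -/
noncomputable def varDensity {α : Type*} (V : List α) (σ : Type*) [Fintype σ] (n : ℕ) : ℝ :=
  (∑ w : Fin n → σ, (density V (List.ofFn w) - expDensity V σ n) ^ 2) /
    (Fintype.card σ : ℝ) ^ n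

/-!
Averaging over the random word, the expected density is the mean, over all positions
`0 ≤ i < j ≤ n`, of the probability `instProb V σ (j - i)` that a uniform word of length `j - i`
is an instance of `V`.

If `V` is doubled, an instance `φ(V)` of length `m` is determined by the lengths `|φ a|` and by
the concatenation of the `φ a` over the distinct letters `a` of `V`, which has length at most
`m / 2`; hence `instProb V σ m ≤ (m / 2 + 1) ^ k * q ^ (-(m / 2)) → 0`, and so do its means.

If a letter `a` occurs exactly once, `V = X a Y`, then sending `a` to an arbitrary word and every
other letter to one fixed letter shows `instProb V σ m ≥ q ^ (-|V|)` for `m ≥ |V|`, and a fixed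
fraction of all substrings of a long word are at least that long.
-/

open Finset

lemma subword_ofFn_append {σ : Type*} {i m k : ℕ} (a : Fin i → σ) (v : Fin m → σ) (b : Fin k → σ) :
    subword (List.ofFn (Fin.append (Fin.append a v) b)) i (i + m) = List.ofFn v := by
  simp [subword]

lemma sum_subword_ofFn {σ : Type*} [Fintype σ] (F : List σ → ℝ) (i m k : ℕ) :
    ∑ w : Fin (i + m + k) → σ, F (subword (List.ofFn w) i (i + m)) =
      (Fintype.card σ : ℝ) ^ (i + k) * ∑ v : Fin m → σ, F (List.ofFn v) := by
  rw [← (Fin.appendEquiv (i + m) k).sum_comp, Fintype.sum_prod_type,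
    ← (Fin.appendEquiv i m).sum_comp, Fintype.sum_prod_type]
  simp only [Fin.appendEquiv, Equiv.coe_fn_mk, subword_ofFn_append]
  simp [Finset.mul_sum, Finset.sum_comm (γ := Fin i → σ), pow_add, mul_assoc]

def substringIndices (n : ℕ) : Finset (ℕ × ℕ) :=
  (range (n + 1) ×ˢ range (n + 1)).filter fun p => p.1 < p.2

noncomputable def substringMean (f : ℕ → ℝ) (n : ℕ) : ℝ :=
  (∑ p ∈ substringIndices n, f (p.2 - p.1)) / (n + 1).choose 2

lemma sum_subword_ofFn_div {σ : Type*} [Fintype σ] [Nonempty σ] (F : List σ → ℝ) {i j n : ℕ}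
    (hij : i ≤ j) (hjn : j ≤ n) :
    (∑ w : Fin n → σ, F (subword (List.ofFn w) i j)) / (Fintype.card σ : ℝ) ^ n =
      (∑ v : Fin (j - i) → σ, F (List.ofFn v)) / (Fintype.card σ : ℝ) ^ (j - i) := by
  obtain ⟨k, rfl⟩ : ∃ k, n = i + (j - i) + k := ⟨n - j, by omega⟩
  obtain ⟨m, rfl⟩ : ∃ m, j = i + m := ⟨j - i, by omega⟩
  rw [Nat.add_sub_cancel_left, sum_subword_ofFn, show i + m + k = m + (i + k) by ring, pow_add _ m,
    mul_comm, mul_div_mul_right _ _ (by positivity)]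

open Classical in
lemma instProb_eq_sum {α σ : Type*} [Fintype σ] (V : List α) (m : ℕ) :
    instProb V σ m = (∑ v : Fin m → σ, if IsInstance V (List.ofFn v) then 1 else 0) /
      (Fintype.card σ : ℝ) ^ m := by
  rw [instProb, Nat.card_eq_fintype_card, Fintype.card_subtype, Finset.sum_boole]

lemma instProb_nonneg {α : Type*} (V : List α) (σ : Type*) [Fintype σ] (m : ℕ) :
    0 ≤ instProb V σ m := by
  unfold instProb; positivity

open Classical in
lemma density_eq_sum {α β : Type*} (V : List α) (W : List β) :
    density V W = (∑ p ∈ substringIndices W.length,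
      if IsInstance V (subword W p.1 p.2) then 1 else 0) / (W.length + 1).choose 2 := by
  rw [density, substringIndices, ← Finset.filter_filter, Finset.card_filter]
  push_cast
  rfl

lemma expDensity_eq_substringMean {α σ : Type*} [Fintype σ] [Nonempty σ] (V : List α) (n : ℕ) :
    expDensity V σ n = substringMean (instProb V σ) n := by
  classical
  simp only [expDensity, substringMean, density_eq_sum, List.length_ofFn]
  rw [← Finset.sum_div, div_right_comm, Finset.sum_comm, Finset.sum_div]
  congr 1
  refine Finset.sum_congr rfl fun p hp => ?_
  simp only [substringIndices, Finset.mem_filter, Finset.mem_product, Finset.mem_range] at hp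
  rw [sum_subword_ofFn_div (fun W => if IsInstance V W then (1 : ℝ) else 0) hp.2.le (by omega),
    instProb_eq_sum]

lemma cast_choose_two_succ (n : ℕ) : ((n + 1).choose 2 : ℝ) = (n + 1) * n / 2 := by
  rw [Nat.cast_choose_two]; push_cast; ring

section SubstringMean

variable {f : ℕ → ℝ}

lemma substringMean_nonneg (hf : ∀ m, 0 ≤ f m) (n : ℕ) : 0 ≤ substringMean f n :=
  div_nonneg (sum_nonneg fun _ _ => hf _) (Nat.cast_nonneg _)

lemma sum_substringIndices_le (hf : ∀ m, 0 ≤ f m) (n : ℕ) :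
    ∑ p ∈ substringIndices n, f (p.2 - p.1) ≤ (n + 1) * ∑ m ∈ range (n + 1), f m := by
  have hinj : Set.InjOn (fun p : ℕ × ℕ => (p.1, p.2 - p.1)) (substringIndices n) := by
    intro p hp p' hp' h
    simp only [substringIndices, mem_coe, mem_filter, Prod.mk.injEq] at hp hp' h
    ext <;> omega
  calc ∑ p ∈ substringIndices n, f (p.2 - p.1)
      = ∑ p ∈ (substringIndices n).image fun p => (p.1, p.2 - p.1), f p.2 :=
        (sum_image (f := fun p => f p.2) hinj).symm
    _ ≤ ∑ p ∈ range (n + 1) ×ˢ range (n + 1), f p.2 := by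
        refine sum_le_sum_of_subset_of_nonneg ?_ fun p _ _ => hf _
        intro p hp
        obtain ⟨q, hq, rfl⟩ := mem_image.1 hp
        simp only [substringIndices, mem_filter, mem_product, mem_range] at hq ⊢
        omega
    _ = (n + 1) * ∑ m ∈ range (n + 1), f m := by
        simp only [sum_product, sum_const, card_range, nsmul_eq_mul]; push_cast; ring

lemma tendsto_substringMean_zero (hf0 : ∀ m, 0 ≤ f m) (hf : Tendsto f atTop (nhds 0)) :
    Tendsto (substringMean f) atTop (nhds 0) := by
  have hces : Tendsto (fun n : ℕ => 4 * (((n : ℝ) + 1)⁻¹ * ∑ m ∈ range (n + 1), f m))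
      atTop (nhds 0) := by
    simpa using ((tendsto_add_atTop_iff_nat 1).2 hf.cesaro).const_mul 4
  refine squeeze_zero' (.of_forall (substringMean_nonneg hf0)) ?_ hces
  filter_upwards [eventually_ge_atTop 1] with n hn
  have hS : 0 ≤ ∑ m ∈ range (n + 1), f m := sum_nonneg fun m _ => hf0 m
  have hn' : (1 : ℝ) ≤ n := by exact_mod_cast hn
  rw [substringMean, cast_choose_two_succ, div_le_iff₀ (by positivity)]
  refine (sum_substringIndices_le hf0 n).trans ?_
  rw [show 4 * (((n : ℝ) + 1)⁻¹ * ∑ m ∈ range (n + 1), f m) * ((n + 1) * n / 2) =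
    2 * n * ∑ m ∈ range (n + 1), f m by field_simp; ring]
  nlinarith

lemma le_substringMean (hf0 : ∀ m, 0 ≤ f m) {c : ℝ} (hc : 0 ≤ c) {L : ℕ}
    (hL : ∀ m, L ≤ m → c ≤ f m) {n : ℕ} (hn : 2 * L + 2 ≤ n) : c / 8 ≤ substringMean f n := by
  set N := (n + 1 - L) / 2
  set B := range N ×ˢ Ico (N + L) (2 * N + L)
  have hB : B ⊆ substringIndices n := by
    intro p hp
    simp only [B, substringIndices, mem_product, mem_range, mem_Ico, mem_filter] at hp ⊢
    omega
  have hsum : (N : ℝ) ^ 2 * c ≤ ∑ p ∈ substringIndices n, f (p.2 - p.1) :=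
    calc (N : ℝ) ^ 2 * c = #B • c := by
          rw [card_product, card_range, Nat.card_Ico, show 2 * N + L - (N + L) = N by omega,
            nsmul_eq_mul]
          push_cast; ring
      _ ≤ ∑ p ∈ B, f (p.2 - p.1) := card_nsmul_le_sum _ _ _ fun p hp => hL _ (by
          simp only [B, mem_product, mem_range, mem_Ico] at hp; omega)
      _ ≤ _ := sum_le_sum_of_subset_of_nonneg hB fun p _ _ => hf0 _
  have hN : ((n : ℝ) + 1) * n ≤ 16 * N ^ 2 := by
    have : (n : ℝ) + 1 ≤ 4 * N := by exact_mod_cast (show n + 1 ≤ 4 * N by omega)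
    nlinarith
  have hn1 : (1 : ℝ) ≤ n := by exact_mod_cast (show 1 ≤ n by omega)
  rw [substringMean, cast_choose_two_succ, le_div_iff₀ (by positivity)]
  nlinarith [mul_le_mul_of_nonneg_left hN hc]

lemma not_tendsto_substringMean_zero (hf0 : ∀ m, 0 ≤ f m) {c : ℝ} (hc : 0 < c) {L : ℕ}
    (hL : ∀ m, L ≤ m → c ≤ f m) : ¬Tendsto (substringMean f) atTop (nhds 0) := fun h => by
  have := ge_of_tendsto h
    (eventually_atTop.2 ⟨2 * L + 2, fun n hn => le_substringMean hf0 hc.le hL hn⟩)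
  linarith

end SubstringMean

lemma List.eq_of_map_length_eq_of_flatten_eq {β : Type*} :
    ∀ {L₁ L₂ : List (List β)}, L₁.map length = L₂.map length → L₁.flatten = L₂.flatten → L₁ = L₂
  | [], [], _, _ => rfl
  | [], _ :: _, h, _ | _ :: _, [], h, _ => by simp at h
  | l₁ :: L₁, l₂ :: L₂, h, hf => by
    simp only [map_cons, cons.injEq] at h
    obtain ⟨rfl, hL⟩ := append_inj hf h.1
    rw [eq_of_map_length_eq_of_flatten_eq h.2 hL]

section Doubled

variable {α : Type*} [DecidableEq α] {V : List α}

lemma Doubled.two_mul_sum_dedup_le (hV : Doubled V) (f : α → ℕ) :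
    2 * (V.dedup.map f).sum ≤ (V.map f).sum := by
  rw [← List.sum_toFinset f (List.nodup_dedup V),
    show V.dedup.toFinset = V.toFinset by ext; simp, Finset.sum_list_map_count,
    Finset.mul_sum]
  exact sum_le_sum fun a ha => Nat.mul_le_mul_right _ (hV a (List.mem_toFinset.1 ha))

lemma Doubled.card_isInstance_le {σ : Type*} [Fintype σ] [Nonempty σ] (hV : Doubled V) (m : ℕ) :
    Nat.card {w : Fin m → σ // IsInstance V (List.ofFn w)} ≤
      (m / 2 + 1) ^ V.toFinset.card * Fintype.card σ ^ (m / 2) := by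
  choose φ hφ using fun w : {w : Fin m → σ // IsInstance V (List.ofFn w)} => w.2
  set flat := fun w => (V.dedup.map (φ w)).flatten
  have flat_le : ∀ w, (flat w).length ≤ m / 2 := by
    intro w
    have h := hV.two_mul_sum_dedup_le (List.length ∘ φ w)
    have hm := congrArg List.length (hφ w).2
    simp only [List.length_ofFn, List.length_flatten, List.map_map] at hm
    simp only [flat, List.length_flatten, List.map_map]
    omega
  have length_le : ∀ w, ∀ a ∈ V, (φ w a).length ≤ m / 2 := fun w a ha =>
    ((List.sublist_flatten_of_mem (List.mem_map_of_mem (List.mem_dedup.2 ha))).length_le).trans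
      (flat_le w)
  let encode : _ → (V.toFinset → Fin (m / 2 + 1)) × (Fin (m / 2) → σ) := fun w =>
    (fun a => ⟨(φ w a).length, Nat.lt_succ_of_le (length_le w a (List.mem_toFinset.1 a.2))⟩,
     fun i => (flat w).getD i (Classical.arbitrary σ))
  have encode_injective : Function.Injective encode := by
    intro w₁ w₂ h
    simp only [encode, Prod.mk.injEq, funext_iff, Fin.ext_iff] at h
    obtain ⟨hlen, hget⟩ := h
    have hmap : (V.dedup.map (φ w₁)).map List.length = (V.dedup.map (φ w₂)).map List.length := by
      simp only [List.map_map]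
      exact List.map_congr_left fun a ha => hlen ⟨a, by simpa using ha⟩
    have hflat : flat w₁ = flat w₂ := by
      refine List.ext_getElem (by simp [flat, List.length_flatten, hmap]) fun i h₁ h₂ => ?_
      simpa [List.getD_eq_getElem, h₁, h₂] using hget ⟨i, h₁.trans_le (flat_le w₁)⟩
    have hφeq := List.map_inj_left.1 (List.eq_of_map_length_eq_of_flatten_eq hmap hflat)
    refine Subtype.ext (List.ofFn_injective ?_)
    rw [(hφ w₁).2, (hφ w₂).2, List.map_congr_left fun a ha => hφeq a (List.mem_dedup.2 ha)]
  calc _ ≤ Nat.card ((V.toFinset → Fin (m / 2 + 1)) × (Fin (m / 2) → σ)) :=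
        Nat.card_le_card_of_injective _ encode_injective
    _ = _ := by
        simp only [Nat.card_eq_fintype_card, Fintype.card_prod, Fintype.card_fun, Fintype.card_coe,
          Fintype.card_fin]

end Doubled

lemma tendsto_succ_pow_mul_const_pow_of_lt_one (K : ℕ) {r : ℝ} (hr₀ : 0 < r) (hr₁ : r < 1) :
    Tendsto (fun t : ℕ => ((t : ℝ) + 1) ^ K * r ^ t) atTop (nhds 0) := by
  have h := ((tendsto_add_atTop_iff_nat 1).2
    (tendsto_pow_const_mul_const_pow_of_lt_one K hr₀.le hr₁)).const_mul r⁻¹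
  rw [mul_zero] at h
  refine h.congr fun t => ?_
  push_cast
  field_simp
  ring

lemma Doubled.tendsto_instProb_zero {α σ : Type*} [DecidableEq α] [Fintype σ] {V : List α}
    (hV : Doubled V) (hq : 2 ≤ Fintype.card σ) : Tendsto (instProb V σ) atTop (nhds 0) := by
  have : Nonempty σ := Fintype.card_pos_iff.1 (by omega)
  set q : ℝ := (Fintype.card σ : ℝ) with hq_def
  have hq1 : 1 < q := by rw [hq_def]; exact_mod_cast hq
  have hbound (m : ℕ) :
      instProb V σ m ≤ (((m / 2 : ℕ) : ℝ) + 1) ^ V.toFinset.card * q⁻¹ ^ (m / 2) := by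
    have hcard : (Nat.card {w : Fin m → σ // IsInstance V (List.ofFn w)} : ℝ) ≤
        (((m / 2 : ℕ) : ℝ) + 1) ^ V.toFinset.card * q ^ (m / 2) := by
      rw [hq_def]; exact_mod_cast hV.card_isInstance_le (σ := σ) m
    have hpow : q ^ (m / 2) ≤ q⁻¹ ^ (m / 2) * q ^ m := by
      rw [inv_pow, ← div_eq_inv_mul, le_div_iff₀ (by positivity), ← pow_add]
      exact pow_le_pow_right₀ hq1.le (by omega)
    rw [instProb, div_le_iff₀ (by positivity), mul_assoc]
    exact hcard.trans (by gcongr)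
  exact squeeze_zero (instProb_nonneg V σ) hbound
    ((tendsto_succ_pow_mul_const_pow_of_lt_one _ (by positivity) (inv_lt_one_of_one_lt₀ hq1)).comp
      (Nat.tendsto_div_const_atTop two_ne_zero))

section NotDoubled

variable {α : Type*} {X Y : List α} {a : α}

lemma exists_eq_append_cons_of_not_doubled [DecidableEq α] {V : List α} (hV : ¬Doubled V) :
    ∃ X a Y, V = X ++ a :: Y ∧ a ∉ X ∧ a ∉ Y := by
  simp only [Doubled, not_forall, not_le] at hV
  obtain ⟨a, ha, hcount⟩ := hV
  obtain ⟨X, Y, rfl⟩ := List.append_of_mem ha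
  simp only [List.count_append, List.count_cons_self] at hcount
  exact ⟨X, a, Y, rfl, List.count_eq_zero.1 (by omega), List.count_eq_zero.1 (by omega)⟩

lemma List.flatten_map_eq_replicate {β : Type*} {l : List α} {f : α → List β} {b : β}
    (h : ∀ x ∈ l, f x = [b]) : (l.map f).flatten = replicate l.length b := by
  rw [map_congr_left h, map_const', flatten_replicate_singleton]

lemma card_le_card_isInstance_append_cons {σ : Type*} [Fintype σ] [Nonempty σ]
    (hX : a ∉ X) (hY : a ∉ Y) (k : ℕ) :
    Fintype.card σ ^ (k + 1) ≤ Nat.card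
      {w : Fin (X.length + (k + 1) + Y.length) → σ // IsInstance (X ++ a :: Y) (List.ofFn w)} := by
  classical
  let s₀ := Classical.arbitrary σ
  let pad (u : Fin (k + 1) → σ) : Fin (X.length + (k + 1) + Y.length) → σ :=
    Fin.append (Fin.append (fun _ => s₀) u) fun _ => s₀
  have hinst (u : Fin (k + 1) → σ) : IsInstance (X ++ a :: Y) (List.ofFn (pad u)) := by
    refine ⟨fun b => if b = a then List.ofFn u else [s₀], fun b => ?_, ?_⟩
    · dsimp only
      split_ifs <;> simp
    · have hrep {l : List α} (hl : a ∉ l) :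
          (l.map fun b => if b = a then List.ofFn u else [s₀]).flatten =
            List.replicate l.length s₀ :=
        List.flatten_map_eq_replicate fun b hb => if_neg (by rintro rfl; exact hl hb)
      rw [List.map_append, List.flatten_append, List.map_cons, List.flatten_cons, hrep hX, hrep hY,
        if_pos rfl]
      simp only [pad, List.ofFn_fin_append, List.ofFn_const, List.append_assoc]
  have hinj : Function.Injective fun u =>
      (⟨_, hinst u⟩ : {w // IsInstance (X ++ a :: Y) (List.ofFn w)}) := by
    intro u₁ u₂ h
    have := congrArg (fun w => subword (List.ofFn w.1) X.length (X.length + (k + 1))) h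
    simpa only [pad, subword_ofFn_append, List.ofFn_inj] using this
  simpa using Nat.card_le_card_of_injective _ hinj

lemma inv_pow_le_instProb_append_cons {σ : Type*} [Fintype σ] [Nonempty σ]
    (hX : a ∉ X) (hY : a ∉ Y) {m : ℕ} (hm : (X ++ a :: Y).length ≤ m) :
    ((Fintype.card σ : ℝ) ^ (X ++ a :: Y).length)⁻¹ ≤ instProb (X ++ a :: Y) σ m := by
  rw [List.length_append, List.length_cons] at hm ⊢
  obtain ⟨k, rfl⟩ : ∃ k, m = X.length + (k + 1) + Y.length :=
    ⟨m - (X.length + 1 + Y.length), by omega⟩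
  have hq : (1 : ℝ) ≤ Fintype.card σ := by exact_mod_cast Fintype.card_pos
  rw [instProb, le_div_iff₀ (by positivity), inv_mul_le_iff₀ (by positivity)]
  calc (Fintype.card σ : ℝ) ^ (X.length + (k + 1) + Y.length)
      ≤ (Fintype.card σ : ℝ) ^ (X.length + (Y.length + 1)) * (Fintype.card σ : ℝ) ^ (k + 1) := by
        rw [← pow_add]; exact pow_le_pow_right₀ hq (by omega)
    _ ≤ _ := by
        gcongr
        exact_mod_cast card_le_card_isInstance_append_cons (σ := σ) hX hY k

end NotDoubled

/-- **The Dichotomy.** Let `V` be a word over any alphabet, `Σ` a finite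
alphabet with `q ≥ 2` letters, and `W_n ∈ Σ^n` chosen uniformly at random.
Then `V` is doubled iff `lim_{n→∞} E(δ(V, W_n)) = 0`. -/
theorem stmt0 {α σ : Type*} [DecidableEq α] [Fintype σ] (V : List α)
    (hq : 2 ≤ Fintype.card σ) :
    Doubled V ↔ Tendsto (fun n => expDensity V σ n) atTop (nhds 0) := by
  have : Nonempty σ := Fintype.card_pos_iff.1 (by omega)
  rw [show (fun n => expDensity V σ n) = substringMean (instProb V σ) from
    funext (expDensity_eq_substringMean V)]
  refine ⟨fun hV => tendsto_substringMean_zero (instProb_nonneg V σ) (hV.tendsto_instProb_zero hq),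
    fun h => by_contra fun hV => ?_⟩
  obtain ⟨X, a, Y, rfl, hX, hY⟩ := exists_eq_append_cons_of_not_doubled hV
  exact not_tendsto_substringMean_zero (instProb_nonneg _ σ) (by positivity)
    (fun m hm => inv_pow_le_instProb_append_cons hX hY hm) h
end

section
/- Let V be a word, let V' be an anagram of V (a rearrangement of the letters of V, so V' has the same letters with the same multiplicities), let Σ be a finite alphabet, and let W_n ∈ Σ^n be chosen uniformly at random. Then E(hom(V,W_n)) = E(hom(V',W_n)). -/
open Filter Asymptotics

/-!
Summing over all words, `|σ|^n · E(hom(V, W_n))` counts the pairs `(W, (a, b, φ))` with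
`W[a,b] = φ(V)`. Such a pair for `V` is sent to one for `V'` by keeping `a`, `b` and the images
`φ(x)` of the letters, and overwriting the window `W[a,b]` with `φ(V')`; since `V'` is a
rearrangement of `V`, the word `φ(V')` has the same length as `φ(V)`. Doing the same in the
other direction inverts this map, so both counts agree.
-/

section Overwrite

variable {σ : Type*} {n : ℕ}

/-- Writes `v` into `w` from position `a` on; letters of `v` beyond the end of `w` are lost. -/
def overwrite (w : Fin n → σ) (a : ℕ) (v : List σ) (j : Fin n) : σ :=
  if a ≤ j then v.getD (j - a) (w j) else w j

lemma length_subword {β : Type*} (W : List β) (a b : ℕ) :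
    (subword W a b).length = min (b - a) (W.length - a) := by
  simp [subword]

lemma getElem_subword {β : Type*} (W : List β) (a b i : ℕ) (h : i < (subword W a b).length) :
    (subword W a b)[i] = W[a + i]'(by rw [length_subword] at h; omega) := by
  simp [subword]

lemma getElem_subword_ofFn (w : Fin n → σ) (a b i : ℕ)
    (h : i < (subword (List.ofFn w) a b).length) :
    (subword (List.ofFn w) a b)[i] =
      w ⟨a + i, by rw [length_subword, List.length_ofFn] at h; omega⟩ := by
  rw [getElem_subword, List.getElem_ofFn]

lemma subword_ofFn_overwrite (w : Fin n → σ) (a b : ℕ) {v : List σ}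
    (hv : v.length = (subword (List.ofFn w) a b).length) :
    subword (List.ofFn (overwrite w a v)) a b = v := by
  have hlen : (subword (List.ofFn (overwrite w a v)) a b).length = v.length := by
    simp only [hv, length_subword, List.length_ofFn]
  refine List.ext_getElem hlen fun i _ hi => ?_
  rw [getElem_subword_ofFn, overwrite, if_pos (by simp),
    List.getD_eq_getElem _ _ (by simpa using hi)]
  simp

lemma overwrite_eq_self_of_subword_eq {w : Fin n → σ} {a b : ℕ} {u : List σ}
    (hw : subword (List.ofFn w) a b = u) : overwrite w a u = w := by
  funext j
  unfold overwrite
  split_ifs with haj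
  · rcases lt_or_ge (j - a) u.length with hj | hj
    · subst hw
      rw [List.getD_eq_getElem _ _ hj, getElem_subword_ofFn]
      congr
      omega
    · exact List.getD_eq_default _ _ hj
  · rfl

lemma overwrite_overwrite (w : Fin n → σ) (a : ℕ) {u v : List σ} (h : u.length = v.length) :
    overwrite (overwrite w a v) a u = overwrite w a u := by
  funext j
  unfold overwrite
  split_ifs with haj
  · rcases lt_or_ge (j - a) u.length with hj | hj
    · simp only [List.getD_eq_getElem _ _ hj]
    · simp only [List.getD_eq_default _ _ hj, List.getD_eq_default _ _ (h ▸ hj)]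
  · rfl

end Overwrite

section Encounters

variable {α σ : Type*}

def IsEncounter (V : List α) (W : List σ) (t : ℕ × ℕ × ({x : α // x ∈ V} → List σ)) :
    Prop :=
  t.1 < t.2.1 ∧ t.2.1 ≤ W.length ∧ (∀ x, t.2.2 x ≠ []) ∧
    subword W t.1 t.2.1 = (V.attach.map t.2.2).flatten

lemma homCount_eq_ncard (V : List α) (W : List σ) :
    homCount V W = {t | IsEncounter V W t}.ncard :=
  rfl

lemma finite_setOf_isEncounter [Finite σ] (V : List α) (W : List σ) :
    {t | IsEncounter V W t}.Finite := by
  have : Finite {x : α // x ∈ V} := V.finite_toSet.to_subtype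
  refine ((Set.finite_Iic W.length).prod ((Set.finite_Iic W.length).prod
    (Set.Finite.pi' fun _ => List.finite_length_le σ W.length))).subset ?_
  rintro ⟨a, b, φ⟩ ⟨hab, hb, -, hW⟩
  refine ⟨Set.mem_Iic.mpr (by omega), Set.mem_Iic.mpr hb, fun x => ?_⟩
  have hle : (φ x).length ≤ (subword W a b).length :=
    hW ▸ (List.sublist_flatten_of_mem (List.mem_map_of_mem (List.mem_attach _ x))).length_le
  rw [length_subword] at hle
  exact (by omega : (φ x).length ≤ W.length)

abbrev Encounters (V : List α) (σ : Type*) (n : ℕ) : Type _ :=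
  {p : (Fin n → σ) × (ℕ × ℕ × ({x : α // x ∈ V} → List σ)) //
    IsEncounter V (List.ofFn p.1) p.2}

lemma sum_homCount_eq_card [Fintype σ] (V : List α) (n : ℕ) :
    ∑ w : Fin n → σ, homCount V (List.ofFn w) = Nat.card (Encounters V σ n) := by
  have (w : Fin n → σ) : Finite {t | IsEncounter V (List.ofFn w) t} :=
    (finite_setOf_isEncounter V _).to_subtype
  simp only [homCount_eq_ncard, ← Nat.card_coe_set_eq]
  exact Nat.card_sigma.symm.trans (Nat.card_congr (Equiv.subtypeProdEquivSigmaSubtype _).symm)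

def transportAssignment {V V' : List α} (h : V.Perm V') (φ : {x : α // x ∈ V} → List σ) :
    {x : α // x ∈ V'} → List σ :=
  fun y => φ ⟨y, h.mem_iff.mpr y.2⟩

lemma length_flatten_transportAssignment {V V' : List α} (h : V.Perm V')
    (φ : {x : α // x ∈ V} → List σ) :
    ((V'.attach.map (transportAssignment h φ)).flatten).length =
      ((V.attach.map φ).flatten).length := by
  have hperm := (h.symm.pmap (fun x hx => φ ⟨x, hx⟩)
    (H₁ := fun _ hx => h.mem_iff.mpr hx) (H₂ := fun _ hx => hx)).flatten.length_eq
  rwa [List.pmap_eq_map_attach, List.pmap_eq_map_attach] at hperm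

variable {n : ℕ}

def transportEncounter {V V' : List α} (h : V.Perm V') :
    (Fin n → σ) × (ℕ × ℕ × ({x : α // x ∈ V} → List σ)) →
      (Fin n → σ) × (ℕ × ℕ × ({x : α // x ∈ V'} → List σ))
  | (w, a, b, φ) =>
    let ψ := transportAssignment h φ
    (overwrite w a ((V'.attach.map ψ).flatten), a, b, ψ)

lemma isEncounter_transportEncounter {V V' : List α} (h : V.Perm V')
    {p : (Fin n → σ) × (ℕ × ℕ × ({x : α // x ∈ V} → List σ))}
    (hp : IsEncounter V (List.ofFn p.1) p.2) :
    IsEncounter V' (List.ofFn (transportEncounter h p).1) (transportEncounter h p).2 := by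
  obtain ⟨w, a, b, φ⟩ := p
  obtain ⟨hab, hb, hφ, hw⟩ := hp
  refine ⟨hab, by simpa [transportEncounter] using hb, fun _ => hφ _,
    subword_ofFn_overwrite w a b ?_⟩
  rw [length_flatten_transportAssignment, hw]

lemma transportEncounter_symm {V V' : List α} (h : V.Perm V')
    {p : (Fin n → σ) × (ℕ × ℕ × ({x : α // x ∈ V} → List σ))}
    (hp : IsEncounter V (List.ofFn p.1) p.2) :
    transportEncounter h.symm (transportEncounter h p) = p := by
  obtain ⟨w, a, b, φ⟩ := p
  refine Prod.ext ?_ rfl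
  change overwrite (overwrite w a _) a ((V.attach.map φ).flatten) = w
  rw [overwrite_overwrite _ _ (by rw [length_flatten_transportAssignment]),
    overwrite_eq_self_of_subword_eq hp.2.2.2]

def encounterEquivOfPerm {V V' : List α} (h : V.Perm V') :
    Encounters V σ n ≃ Encounters V' σ n where
  toFun p := ⟨transportEncounter h p, isEncounter_transportEncounter h p.2⟩
  invFun p := ⟨transportEncounter h.symm p, isEncounter_transportEncounter h.symm p.2⟩
  left_inv p := Subtype.ext (transportEncounter_symm h p.2)
  right_inv p := Subtype.ext (transportEncounter_symm h.symm p.2)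

lemma sum_homCount_eq_of_perm [Fintype σ] {V V' : List α} (h : V.Perm V') (n : ℕ) :
    ∑ w : Fin n → σ, homCount V (List.ofFn w) =
      ∑ w : Fin n → σ, homCount V' (List.ofFn w) := by
  rw [sum_homCount_eq_card, sum_homCount_eq_card, Nat.card_congr (encounterEquivOfPerm h)]

end Encounters

/-- If `V'` is an anagram of `V`, then `E(hom(V, W_n)) = E(hom(V', W_n))`. -/
theorem stmt4 {α σ : Type*} [Fintype σ] (V V' : List α) (h : V.Perm V') (n : ℕ) :
    expHom V σ n = expHom V' σ n := by
  simp only [expHom, ← Nat.cast_sum, sum_homCount_eq_of_perm h n]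
end

section
/- Let V be a word with distinct letters x_1, …, x_k, where x_i has multiplicity r_i in V; let r = min_i r_i, d = gcd(r_1, …, r_k), and let U be the word obtained from V by deleting every occurrence of each letter of multiplicity r. Let Σ be a finite alphabet with q ≥ 2 letters. Then, as n → ∞, the proportion of V-instances W ∈ Σ^{dn} for which there exists a nonerasing homomorphism φ with φ(V) = W and |φ(U)| < √(dn) tends to 1. -/
open Filter Asymptotics

/-!
Write `m = d n`, `q = |Σ|` and `K` for the number of distinct letters of `V`. A `V`-instance
`W = φ(V)` of length `m` is determined by the lengths `|φ x|` (at most `(m + 1) ^ K` choices) and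
the word `φ(x₁) ⋯ φ(x_K)`. Every letter of `U` has multiplicity at least `r + 1`, so
`r (r + 1) ∑ |φ x| + |φ(U)| ≤ (r + 1) m`; hence if `|φ(U)| ≥ √m` there are at most
`(m + 1) ^ K q ^ (m / r - √m / (r (r + 1)))` such words. On the other hand, by Bézout's identity
for the multiplicities there is a choice of lengths with `∑ |φ x| ≥ m / r - 2 |V|`, which gives
at least `q ^ (m / r - 2 |V|)` instances. The ratio of the two bounds tends to `0`.
-/

open Topology

theorem natCard_subtype_mono {β : Type*} [Finite β] {p q : β → Prop} (h : ∀ x, p x → q x) :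
    Nat.card {x // p x} ≤ Nat.card {x // q x} :=
  Nat.card_mono (Set.toFinite {x | q x}) h

theorem natCard_subtype_le_add {β : Type*} [Finite β] {p q₁ q₂ : β → Prop}
    (h : ∀ x, p x → q₁ x ∨ q₂ x) :
    Nat.card {x // p x} ≤ Nat.card {x // q₁ x} + Nat.card {x // q₂ x} := by
  classical
  have := Fintype.ofFinite β
  simp only [Nat.card_eq_fintype_card]
  exact (Fintype.card_subtype_mono _ _ h).trans (Fintype.card_subtype_or _ _)

theorem Finset.natCast_gcd {α : Type*} (s : Finset α) (c : α → ℕ) :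
    ((s.gcd c : ℕ) : ℤ) = s.gcd fun a => (c a : ℤ) := by
  classical
  induction s using Finset.induction with
  | empty => simp
  | insert a s _ ih =>
    rw [Finset.gcd_insert, Finset.gcd_insert, ← ih, ← Int.coe_gcd, Int.gcd_natCast_natCast]
    rfl

section Multiplicities

variable {α : Type*} [DecidableEq α]

theorem exists_sum_erase_mul_modEq {s : Finset α} {c : α → ℕ} {a₀ : α} (ha₀ : a₀ ∈ s)
    (hc : 0 < c a₀) {m : ℕ} (hdvd : s.gcd c ∣ m) :
    ∃ ℓ : α → ℕ, (∀ a, c a₀ ≤ ℓ a ∧ ℓ a ≤ 2 * c a₀) ∧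
      ∑ a ∈ s.erase a₀, c a * ℓ a ≡ m [MOD c a₀] := by
  set r := c a₀
  obtain ⟨y, hy⟩ := Finset.gcd_eq_sum_mul s fun a => (c a : ℤ)
  rw [← Finset.natCast_gcd] at hy
  obtain ⟨k, rfl⟩ := hdvd
  have hr : (0 : ℤ) < r := by exact_mod_cast hc
  -- `∑ c a * (k * y a) = m`, and moving each `k * y a` to a representative in `[r, 2r)` only
  -- changes the sum by multiples of `r = c a₀`
  let ℓ (a : α) : ℕ := (k * y a % r).toNat + r
  have hℓ_modEq (a) : (ℓ a : ℤ) ≡ k * y a [ZMOD r] := by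
    simp only [ℓ, Nat.cast_add, Int.toNat_of_nonneg (Int.emod_nonneg _ hr.ne')]
    exact ((Int.mod_modEq _ _).add_right _).trans (by simp [Int.ModEq])
  refine ⟨ℓ, fun a => ⟨Nat.le_add_left _ _, ?_⟩, ?_⟩
  · have := Int.emod_lt_of_pos (k * y a) hr
    simp only [ℓ]
    omega
  rw [← Int.natCast_modEq_iff]
  calc ((∑ a ∈ s.erase a₀, c a * ℓ a : ℕ) : ℤ) = ∑ a ∈ s.erase a₀, (c a : ℤ) * ℓ a := by
        push_cast; rfl
    _ ≡ ∑ a ∈ s.erase a₀, (c a : ℤ) * (k * y a) [ZMOD r] :=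
        Int.ModEq.sum fun a _ => (hℓ_modEq a).mul_left _
    _ ≡ r * (k * y a₀) + ∑ a ∈ s.erase a₀, (c a : ℤ) * (k * y a) [ZMOD r] := by
        simp [Int.ModEq]
    _ = ((s.gcd c * k : ℕ) : ℤ) := by
        rw [Nat.cast_mul, hy, Finset.sum_mul, ← Finset.add_sum_erase s _ ha₀]
        congr 1
        · ring
        · exact Finset.sum_congr rfl fun a _ => by ring

theorem exists_pos_sum_mul_eq_of_gcd_dvd {s : Finset α} {c : α → ℕ} {a₀ : α} (ha₀ : a₀ ∈ s)
    (hc : 0 < c a₀) {m : ℕ} (hdvd : s.gcd c ∣ m) (hm : c a₀ * (2 * ∑ a ∈ s, c a + 1) ≤ m) :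
    ∃ ℓ : α → ℕ, (∀ a ∈ s, 1 ≤ ℓ a) ∧ ∑ a ∈ s, c a * ℓ a = m ∧
      m ≤ c a₀ * (ℓ a₀ + 2 * ∑ a ∈ s, c a) := by
  set r := c a₀
  obtain ⟨ℓ, hℓ, hmod⟩ := exists_sum_erase_mul_modEq ha₀ hc hdvd
  set S := ∑ a ∈ s.erase a₀, c a * ℓ a
  have hS : S ≤ r * (2 * ∑ a ∈ s, c a) := calc
    S ≤ ∑ a ∈ s.erase a₀, c a * (2 * r) :=
      Finset.sum_le_sum fun a _ => Nat.mul_le_mul_left _ (hℓ a).2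
    _ ≤ ∑ a ∈ s, c a * (2 * r) := Finset.sum_le_sum_of_subset (Finset.erase_subset _ _)
    _ = r * (2 * ∑ a ∈ s, c a) := by rw [← Finset.sum_mul]; ring
  have hm' : r * (2 * ∑ a ∈ s, c a) + r ≤ m := by rwa [mul_add_one] at hm
  have hdiv : r ∣ m - S := (Nat.modEq_iff_dvd' (by omega)).1 hmod
  refine ⟨Function.update ℓ a₀ ((m - S) / r), fun a _ => ?_, ?_, ?_⟩
  · rcases eq_or_ne a a₀ with ha | ha
    · rw [ha, Function.update_self, Nat.le_div_iff_mul_le hc, one_mul]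
      omega
    · rw [Function.update_of_ne ha]
      exact hc.trans_le (hℓ a).1
  · rw [← Finset.add_sum_erase s _ ha₀, Function.update_self, Nat.mul_div_cancel' hdiv,
      Finset.sum_congr rfl fun a ha => by rw [Function.update_of_ne (Finset.ne_of_mem_erase ha)]]
    omega
  · rw [Function.update_self, mul_add, Nat.mul_div_cancel' hdiv]
    omega

end Multiplicities

section Words

variable {α σ : Type*}

theorem length_flatten_map_eq_sum_count [DecidableEq α] (L : List α) (f : α → List σ)
    {s : Finset α} (hs : L.toFinset ⊆ s) :
    (L.map f).flatten.length = ∑ a ∈ s, L.count a * (f a).length := by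
  rw [List.length_flatten, List.map_map, Finset.sum_list_map_count]
  refine Finset.sum_subset hs fun a _ ha => ?_
  simp [List.count_eq_zero.2 (mt List.mem_toFinset.2 ha)]

theorem eqOn_of_flatten_map_eq {L : List α} {f g : α → List σ}
    (hlen : ∀ a ∈ L, (f a).length = (g a).length)
    (h : (L.map f).flatten = (L.map g).flatten) : ∀ a ∈ L, f a = g a := by
  induction L with
  | nil => simp
  | cons b L ih =>
    simp only [List.map_cons, List.flatten_cons] at h
    obtain ⟨hb, hL⟩ := List.append_inj h (hlen b List.mem_cons_self)
    simp only [List.forall_mem_cons] at hlen ⊢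
    exact ⟨hb, ih hlen.2 hL⟩

theorem natCard_subtype_ofFn (P : List σ → Prop) (m : ℕ) :
    Nat.card {w : Fin m → σ // P (List.ofFn w)} = Nat.card {v : List.Vector σ m // P v.toList} :=
  Nat.card_congr ((Equiv.vectorEquivFin σ m).symm.subtypeEquiv fun w => by
    simp [Equiv.vectorEquivFin])

theorem pow_sum_le_natCard_isInstance [DecidableEq α] [Fintype σ] [Nonempty σ] (V : List α)
    {ℓ : α → ℕ} (hℓ : ∀ a ∈ V, 1 ≤ ℓ a) {m : ℕ}
    (hm : ∑ a ∈ V.toFinset, V.count a * ℓ a = m) :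
    Fintype.card σ ^ ∑ a ∈ V.toFinset, ℓ a ≤
      Nat.card {v : List.Vector σ m // IsInstance V v.toList} := by
  let φ (ψ : (a : V.toFinset) → List.Vector σ (ℓ a)) (a : α) : List σ :=
    if h : a ∈ V.toFinset then (ψ ⟨a, h⟩).toList else [Classical.arbitrary σ]
  have hlen (ψ) : ∀ a ∈ V.toFinset, (φ ψ a).length = ℓ a := by
    intro a ha
    simp only [φ, dif_pos ha, List.Vector.toList_length]
  have hne (ψ) (a : α) : φ ψ a ≠ [] := by
    by_cases ha : a ∈ V.toFinset
    · rw [← List.length_pos_iff, hlen ψ a ha]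
      exact hℓ a (List.mem_toFinset.1 ha)
    · simp only [φ, dif_neg ha]
      exact List.cons_ne_nil _ _
  let F (ψ : (a : V.toFinset) → List.Vector σ (ℓ a)) :
      {v : List.Vector σ m // IsInstance V v.toList} :=
    ⟨⟨(V.map (φ ψ)).flatten, by
      rw [length_flatten_map_eq_sum_count _ _ subset_rfl, ← hm]
      exact Finset.sum_congr rfl fun a ha => by rw [hlen ψ a ha]⟩, φ ψ, hne ψ, rfl⟩
  have hF : Function.Injective F := by
    intro ψ₁ ψ₂ h
    have heq := eqOn_of_flatten_map_eq
      (fun a ha => by rw [hlen _ a (List.mem_toFinset.2 ha), hlen _ a (List.mem_toFinset.2 ha)])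
      (congrArg (fun v => v.1.toList) h)
    funext a
    apply List.Vector.toList_injective
    simpa only [φ, dif_pos a.2] using heq a (List.mem_toFinset.1 a.2)
  calc Fintype.card σ ^ ∑ a ∈ V.toFinset, ℓ a
      = Nat.card ((a : V.toFinset) → List.Vector σ (ℓ a)) := by
        simp [Nat.card_eq_fintype_card, Fintype.card_pi, card_vector,
          Finset.prod_pow_eq_pow_sum, Finset.sum_attach V.toFinset ℓ]
    _ ≤ _ := Nat.card_le_card_of_injective F hF

theorem natCard_le_of_sum_length_le [DecidableEq α] [Fintype σ] [Nonempty σ] (V : List α)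
    (m E : ℕ) (P : (α → List σ) → Prop)
    (hE : ∀ φ, P φ → (V.map φ).flatten.length = m → ∑ a ∈ V.toFinset, (φ a).length ≤ E) :
    Nat.card {v : List.Vector σ m // ∃ φ, v.toList = (V.map φ).flatten ∧ P φ} ≤
      (m + 1) ^ V.toFinset.card * Fintype.card σ ^ E := by
  choose φ hφ hP using
    fun v : {v : List.Vector σ m // ∃ φ, v.toList = (V.map φ).flatten ∧ P φ} => v.2
  have hm (v) : (V.map (φ v)).flatten.length = m := by rw [← hφ v]; exact v.1.2
  have hle (v) : ∀ a ∈ V, (φ v a).length ≤ m := fun a ha =>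
    hm v ▸ (List.sublist_flatten_of_mem (List.mem_map_of_mem ha)).length_le
  let u v := (V.toFinset.toList.map (φ v)).flatten
  have hu (v) : (u v).length = ∑ a ∈ V.toFinset, (φ v a).length := by
    rw [List.length_flatten, List.map_map, Finset.sum_map_toList]
    rfl
  let F v : (V.toFinset → Fin (m + 1)) × (Fin E → σ) :=
    (fun a => ⟨(φ v a).length, Nat.lt_succ_of_le (hle v a (List.mem_toFinset.1 a.2))⟩,
      fun i => (u v).getD i (Classical.arbitrary σ))
  have hF : Function.Injective F := by
    intro v w h
    simp only [F, Prod.ext_iff, funext_iff, Fin.ext_iff] at h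
    obtain ⟨hlen, hpad⟩ := h
    have huw : u v = u w := by
      refine List.ext_getElem ?_ fun i hv hw => ?_
      · rw [hu, hu]
        exact Finset.sum_congr rfl fun a ha => hlen ⟨a, ha⟩
      have hiE : i < E := hv.trans_le (hu v ▸ hE _ (hP v) (hm v))
      simpa [List.getD_eq_getElem, hv, hw] using hpad ⟨i, hiE⟩
    have heq := eqOn_of_flatten_map_eq
      (fun a ha => hlen ⟨a, Finset.mem_toList.1 ha⟩) huw
    apply Subtype.ext
    apply List.Vector.toList_injective
    rw [hφ, hφ]
    exact congrArg List.flatten <| List.map_congr_left fun a ha =>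
      heq a (by simpa using ha)
  calc _ ≤ Nat.card ((V.toFinset → Fin (m + 1)) × (Fin E → σ)) :=
        Nat.card_le_card_of_injective F hF
    _ = (m + 1) ^ V.toFinset.card * Fintype.card σ ^ E := by
        simp only [Nat.card_eq_fintype_card, Fintype.card_prod, Fintype.card_fun,
          Fintype.card_fin, Fintype.card_coe]

theorem mul_sum_length_add_length_filter_le [DecidableEq α] (V : List α) {r : ℕ}
    (hr : ∀ a ∈ V, r ≤ V.count a) (φ : α → List σ) :
    r * (r + 1) * ∑ a ∈ V.toFinset, (φ a).length +
        ((V.filter fun a => V.count a ≠ r).map φ).flatten.length ≤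
      (r + 1) * (V.map φ).flatten.length := by
  rw [length_flatten_map_eq_sum_count _ _ (s := V.toFinset) (fun a => by simp; tauto),
    length_flatten_map_eq_sum_count _ _ subset_rfl, Finset.mul_sum, Finset.mul_sum,
    ← Finset.sum_add_distrib]
  refine Finset.sum_le_sum fun a ha => ?_
  have := hr a (List.mem_toFinset.1 ha)
  by_cases har : V.count a = r
  · rw [List.count_eq_zero.2 (by simp [har])]
    subst har
    nlinarith
  · rw [List.count_filter (by simpa using har)]
    nlinarith [Nat.mul_le_mul_left (r * (φ a).length) (Nat.lt_of_le_of_ne this (Ne.symm har))]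

theorem rpow_le_natCard_isInstance [DecidableEq α] [Fintype σ] [Nonempty σ] {V : List α}
    {a₀ : α} (ha₀ : a₀ ∈ V) {m : ℕ} (hdvd : (V.toFinset.gcd fun a => V.count a) ∣ m)
    (hm : V.count a₀ * (2 * V.length + 1) ≤ m) :
    (Fintype.card σ : ℝ) ^ ((m : ℝ) / V.count a₀ - 2 * V.length) ≤
      Nat.card {w : Fin m → σ // IsInstance V (List.ofFn w)} := by
  have hc : 0 < V.count a₀ := List.count_pos_iff.2 ha₀
  obtain ⟨ℓ, hℓ, hsum, hle⟩ := exists_pos_sum_mul_eq_of_gcd_dvd (List.mem_toFinset.2 ha₀) hc hdvd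
    (by rwa [List.sum_toFinset_count_eq_length])
  rw [List.sum_toFinset_count_eq_length] at hle
  have hq : (1 : ℝ) ≤ Fintype.card σ := by exact_mod_cast Fintype.card_pos
  calc (Fintype.card σ : ℝ) ^ ((m : ℝ) / V.count a₀ - 2 * V.length)
      ≤ (Fintype.card σ : ℝ) ^ (ℓ a₀ : ℝ) := by
        refine Real.rpow_le_rpow_of_exponent_le hq ?_
        rw [sub_le_iff_le_add, div_le_iff₀ (by exact_mod_cast hc)]
        exact_mod_cast (mul_comm _ _).trans_ge hle
    _ ≤ (Fintype.card σ : ℝ) ^ ∑ a ∈ V.toFinset, ℓ a := by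
        rw [Real.rpow_natCast]
        exact pow_le_pow_right₀ hq
          (Finset.single_le_sum (fun _ _ => Nat.zero_le _) (List.mem_toFinset.2 ha₀))
    _ ≤ _ := by
        rw [natCard_subtype_ofFn (IsInstance V)]
        exact_mod_cast pow_sum_le_natCard_isInstance (σ := σ) V
          (fun a ha => hℓ a (List.mem_toFinset.2 ha)) hsum

theorem natCard_le_rpow [DecidableEq α] [Fintype σ] [Nonempty σ] (V : List α) {r : ℕ}
    (hr₀ : 0 < r) (hr : ∀ a ∈ V, r ≤ V.count a) (m : ℕ) :
    (Nat.card {w : Fin m → σ // ∃ φ : α → List σ, List.ofFn w = (V.map φ).flatten ∧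
        √m ≤ ((V.filter fun a => V.count a ≠ r).map φ).flatten.length} : ℝ) ≤
      ((m : ℝ) + 1) ^ V.toFinset.card *
        (Fintype.card σ : ℝ) ^ ((m : ℝ) / r - √m / (r * (r + 1))) := by
  set x : ℝ := (m : ℝ) / r - √m / (r * (r + 1)) with hx
  have hx' : x = ((r + 1) * m - √m) / (r * (r + 1)) := by
    rw [hx]
    field_simp
  have hr' : (0 : ℝ) < r * (r + 1) := by positivity
  have hx₀ : 0 ≤ x := by
    have : √(m : ℝ) ≤ m := Real.sqrt_le_self_iff.2 <| by
      rcases Nat.eq_zero_or_pos m with h | h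
      · simp [h]
      · exact Or.inr (by exact_mod_cast h)
    rw [hx']
    exact div_nonneg (by nlinarith [Real.sqrt_nonneg (m : ℝ)]) hr'.le
  have hE (φ : α → List σ)
      (hφ : √m ≤ ((V.filter fun a => V.count a ≠ r).map φ).flatten.length)
      (hlen : (V.map φ).flatten.length = m) : ∑ a ∈ V.toFinset, (φ a).length ≤ ⌊x⌋₊ := by
    have key := mul_sum_length_add_length_filter_le V hr φ
    rw [hlen] at key
    have key' : (r * (r + 1) * ∑ a ∈ V.toFinset, (φ a).length : ℝ) +
        ((V.filter fun a => V.count a ≠ r).map φ).flatten.length ≤ (r + 1) * m := by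
      exact_mod_cast key
    refine Nat.le_floor ?_
    rw [hx', le_div_iff₀ hr']
    linarith
  have hq : (1 : ℝ) ≤ Fintype.card σ := by exact_mod_cast Fintype.card_pos
  rw [natCard_subtype_ofFn (fun W => ∃ φ : α → List σ, W = (V.map φ).flatten ∧
    √m ≤ ((V.filter fun a => V.count a ≠ r).map φ).flatten.length)]
  calc _ ≤ (((m + 1) ^ V.toFinset.card * Fintype.card σ ^ ⌊x⌋₊ : ℕ) : ℝ) := by
        exact_mod_cast natCard_le_of_sum_length_le V m ⌊x⌋₊ _ hE
    _ ≤ _ := by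
        push_cast
        gcongr
        rw [← Real.rpow_natCast]
        exact Real.rpow_le_rpow_of_exponent_le hq (Nat.floor_le hx₀)

end Words

theorem tendsto_pow_mul_rpow_sub_sqrt {q c : ℝ} (hq : 1 < q) (hc : 0 < c) (K : ℕ) (C : ℝ) :
    Tendsto (fun m : ℕ => ((m : ℝ) + 1) ^ K * q ^ (C - √m / c)) atTop (𝓝 0) := by
  set b := Real.log q / c with hb_def
  have hb : 0 < b := div_pos (Real.log_pos hq) hc
  have hs : Tendsto (fun m : ℕ => √(m : ℝ) + 1) atTop atTop :=
    tendsto_atTop_add_const_right _ 1 (Real.tendsto_sqrt_atTop.comp tendsto_natCast_atTop_atTop)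
  have hlim := ((tendsto_rpow_mul_exp_neg_mul_atTop_nhds_zero ((2 * K : ℕ) : ℝ) b hb).comp
    hs).const_mul (q ^ C * Real.exp b)
  rw [mul_zero] at hlim
  refine squeeze_zero (fun m => by positivity) (fun m => ?_) hlim
  have hpow : ((m : ℝ) + 1) ^ K ≤ (√m + 1) ^ ((2 * K : ℕ) : ℝ) := by
    rw [Real.rpow_natCast, pow_mul]
    refine pow_le_pow_left₀ (by positivity) ?_ K
    nlinarith [Real.sq_sqrt (Nat.cast_nonneg m : (0 : ℝ) ≤ m), Real.sqrt_nonneg (m : ℝ)]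
  have hexp : q ^ (C - √m / c) = q ^ C * Real.exp b * Real.exp (-b * (√m + 1)) := by
    rw [Real.rpow_def_of_pos (by linarith), Real.rpow_def_of_pos (by linarith),
      ← Real.exp_add, ← Real.exp_add]
    congr 1
    rw [hb_def]
    field_simp
    ring
  calc ((m : ℝ) + 1) ^ K * q ^ (C - √m / c)
      ≤ (√m + 1) ^ ((2 * K : ℕ) : ℝ) * (q ^ C * Real.exp b * Real.exp (-b * (√m + 1))) := by
        rw [hexp]; gcongr
    _ = _ := by simp only [Function.comp]; ring

theorem tendsto_div_nhds_one_of_le_add {ι : Type*} {l : Filter ι} {g i b : ι → ℝ}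
    (hgi : ∀ n, g n ≤ i n) (higb : ∀ n, i n ≤ g n + b n) (hi : ∀ᶠ n in l, 0 < i n)
    (hb : Tendsto (fun n => b n / i n) l (𝓝 0)) : Tendsto (fun n => g n / i n) l (𝓝 1) := by
  have h1 : Tendsto (fun n => 1 - b n / i n) l (𝓝 1) := by simpa using hb.const_sub 1
  refine tendsto_of_tendsto_of_tendsto_of_le_of_le' h1 tendsto_const_nhds ?_ ?_
  · filter_upwards [hi] with n hn
    rw [one_sub_div hn.ne', div_le_div_iff_of_pos_right hn]
    linarith [higb n]
  · filter_upwards [hi] with n hn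
    exact div_le_one_of_le₀ (hgi n) hn.le

theorem tendsto_div_nhds_zero_of_le_rpow {ι : Type*} {l : Filter ι} {b i : ι → ℝ} {m : ι → ℕ}
    (hm : Tendsto m l atTop) {q r c C : ℝ} (hq : 1 < q) (hc : 0 < c) (K : ℕ)
    (hb : ∀ n, 0 ≤ b n) (hbm : ∀ n, b n ≤ ((m n : ℝ) + 1) ^ K * q ^ (m n / r - √(m n) / c))
    (him : ∀ᶠ n in l, q ^ (m n / r - C) ≤ i n) : Tendsto (fun n => b n / i n) l (𝓝 0) := by
  have hq0 : 0 < q := by linarith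
  refine squeeze_zero' ?_ ?_ ((tendsto_pow_mul_rpow_sub_sqrt hq hc K C).comp hm)
  · filter_upwards [him] with n hn
    exact div_nonneg (hb n) ((Real.rpow_pos_of_pos hq0 _).le.trans hn)
  · filter_upwards [him] with n hn
    calc b n / i n
        ≤ ((m n : ℝ) + 1) ^ K * q ^ (m n / r - √(m n) / c) / q ^ (m n / r - C) :=
          div_le_div₀ (by positivity) (hbm n) (Real.rpow_pos_of_pos hq0 _) hn
      _ = ((m n : ℝ) + 1) ^ K * q ^ (C - √(m n) / c) := by
          rw [mul_div_assoc, ← Real.rpow_sub hq0]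
          ring_nf

theorem stmt6_general {α σ : Type*} [DecidableEq α] [Fintype σ] (V : List α)
    (hq : 2 ≤ Fintype.card σ) (r d : ℕ)
    (hr : (∀ a ∈ V, r ≤ V.count a) ∧ ∃ a ∈ V, V.count a = r)
    (hd : d = V.toFinset.gcd fun a => V.count a) :
    Tendsto (fun n : ℕ =>
      (Nat.card {w : Fin (d * n) → σ // ∃ φ : α → List σ, (∀ a, φ a ≠ []) ∧
          List.ofFn w = (V.map φ).flatten ∧
          ((((V.filter fun a => V.count a ≠ r).map φ).flatten.length : ℝ) <
            Real.sqrt (d * n))} : ℝ) /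
        (Nat.card {w : Fin (d * n) → σ // IsInstance V (List.ofFn w)} : ℝ))
      atTop (nhds 1) := by
  obtain ⟨hrmin, a₀, ha₀, rfl⟩ := hr
  have hc : 0 < V.count a₀ := List.count_pos_iff.2 ha₀
  have hd₀ : 0 < d := Nat.pos_of_dvd_of_pos (hd ▸ Finset.gcd_dvd (List.mem_toFinset.2 ha₀)) hc
  have : Nonempty σ := Fintype.card_pos_iff.1 (by omega)
  have hq₁ : (1 : ℝ) < Fintype.card σ := by exact_mod_cast hq
  have hdn : Tendsto (fun n => d * n) atTop atTop :=
    tendsto_atTop_mono (fun n => Nat.le_mul_of_pos_left n hd₀) tendsto_id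
  have hlow : ∀ᶠ n in atTop, (Fintype.card σ : ℝ) ^ (((d * n : ℕ) : ℝ) / V.count a₀ -
      2 * V.length) ≤ Nat.card {w : Fin (d * n) → σ // IsInstance V (List.ofFn w)} := by
    filter_upwards [eventually_ge_atTop (V.count a₀ * (2 * V.length + 1))] with n hn
    exact rpow_le_natCard_isInstance ha₀ (hd ▸ dvd_mul_right d n)
      (hn.trans (Nat.le_mul_of_pos_left n hd₀))
  refine tendsto_div_nhds_one_of_le_add (fun n => ?_) (fun n => ?_)
    (hlow.mono fun n h => (Real.rpow_pos_of_pos (by linarith) _).trans_le h)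
    (tendsto_div_nhds_zero_of_le_rpow hdn hq₁ (by positivity) _ (fun n => Nat.cast_nonneg _)
      (fun n => natCard_le_rpow V hc hrmin (d * n)) hlow)
  · refine Nat.cast_le.2 (natCard_subtype_mono ?_)
    rintro w ⟨φ, hφ, hw, -⟩
    exact ⟨φ, hφ, hw⟩
  · refine (Nat.cast_le.2 (natCard_subtype_le_add ?_)).trans_eq (Nat.cast_add _ _)
    rintro w ⟨φ, hφ, hw⟩
    rcases lt_or_ge (((V.filter fun a => V.count a ≠ V.count a₀).map φ).flatten.length : ℝ)
      √((d * n : ℕ) : ℝ) with h | h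
    · exact Or.inl ⟨φ, hφ, hw, by exact_mod_cast h⟩
    · exact Or.inr ⟨φ, hw, h⟩

/-- Let `V` have minimal letter-multiplicity `r` and gcd of multiplicities `d`,
let `U` be `V` with all letters of multiplicity `r` removed, and let `|Σ| = q ≥ 2`.
Then, as `n → ∞`, the proportion of `V`-instances `W ∈ Σ^{dn}` admitting a
nonerasing homomorphism `φ` with `φ(V) = W` and `|φ(U)| < √(dn)` tends to 1. -/
theorem stmt6 {α σ : Type*} [DecidableEq α] [Fintype σ] (V : List α) (hV : V ≠ [])
    (hq : 2 ≤ Fintype.card σ) (r d : ℕ)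
    (hr : (∀ a ∈ V, r ≤ V.count a) ∧ ∃ a ∈ V, V.count a = r)
    (hd : d = V.toFinset.gcd fun a => V.count a) :
    Tendsto (fun n : ℕ =>
      (Nat.card {w : Fin (d * n) → σ // ∃ φ : α → List σ, (∀ a, φ a ≠ []) ∧
          List.ofFn w = (V.map φ).flatten ∧
          ((((V.filter fun a => V.count a ≠ r).map φ).flatten.length : ℝ) <
            Real.sqrt (d * n))} : ℝ) /
        (Nat.card {w : Fin (d * n) → σ // IsInstance V (List.ofFn w)} : ℝ))
      atTop (nhds 1) :=
  stmt6_general V hq r d hr hd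
end

section
/- Let V be a doubled word with exactly k distinct letters x_1, …, x_k, where x_i has multiplicity r_i in V; let d = gcd(r_1, …, r_k) and r = min_i r_i. Let Σ be a finite alphabet with q ≥ 2 letters. Then for every n ≥ 1, I_n(V,Σ) ≤ [∏_{i=0}^{k} (n/d + k + 1 − i)/(k+1)!] · q^{n(1−r)/r}, where the first factor is the generalized binomial coefficient C(n/d + k + 1, k + 1) evaluated over the reals. -/
/-!
An instance `W = φ(V)` of length `n` is determined by the lengths `ℓ a = |φ a|` of the images of
the distinct letters of `V` together with the concatenation of these images, taken once each.
Since every letter occurs at least `r` times, `r · ∑ ℓ a ≤ n`, so the concatenation has length at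
most `n / r` and the length profile is one of at most `C(n/r + k, k)` vectors (stars and bars).
Hence at most `C(n/r + k, k) · q^(n/r)` of the `q^n` words are instances, and `r ≥ d` bounds the
binomial coefficient by the generalized one in `n/d`.
-/

open Filter Asymptotics

open Finset

namespace List

variable {α β : Type*}

theorem length_flatten_map_eq_sum_count [DecidableEq α] (V : List α) (φ : α → List β) :
    (V.map φ).flatten.length = ∑ a ∈ V.toFinset, V.count a * (φ a).length := by
  simp [length_flatten, Finset.sum_list_map_count]

theorem eq_of_flatten_map_eq {l : List α} {φ ψ : α → List β}
    (hlen : ∀ a ∈ l, (φ a).length = (ψ a).length)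
    (h : (l.map φ).flatten = (l.map ψ).flatten) : ∀ a ∈ l, φ a = ψ a := by
  induction l with
  | nil => simp
  | cons b l ih =>
    simp only [map_cons, flatten_cons] at h
    obtain ⟨hb, hl⟩ := append_inj h (hlen b mem_cons_self)
    simp only [mem_cons, forall_eq_or_imp] at hlen ⊢
    exact ⟨hb, ih hlen.2 hl⟩

theorem eq_of_getD_eq {l₁ l₂ : List α} {M : ℕ} (z : α) (hlen : l₁.length = l₂.length)
    (hM : l₁.length ≤ M) (h : ∀ i < M, l₁.getD i z = l₂.getD i z) : l₁ = l₂ := by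
  refine ext_getElem hlen fun i h₁ h₂ => ?_
  rw [← getD_eq_getElem _ z h₁, ← getD_eq_getElem _ z h₂]
  exact h i (h₁.trans_le hM)

end List

/-- Stars and bars: the slack `m - ∑ ℓ` becomes the mass of the extra point `none`. -/
noncomputable def funSumLeEmbSym (ι : Type*) [Fintype ι] [DecidableEq ι] (m : ℕ) :
    {ℓ : ι → ℕ // ∑ i, ℓ i ≤ m} ↪ Sym (Option ι) m where
  toFun ℓ := (Sym.equivNatSumOfFintype _ m).symm
    ⟨fun i => i.elim (m - ∑ i, ℓ.1 i) ℓ.1, by simp [Fintype.sum_option, ℓ.2]⟩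
  inj' ℓ ℓ' h := Subtype.ext <| funext fun i =>
    congrFun (congrArg Subtype.val ((Sym.equivNatSumOfFintype _ m).symm.injective h)) (some i)

instance {ι : Type*} [Fintype ι] [DecidableEq ι] (m : ℕ) :
    Finite {ℓ : ι → ℕ // ∑ i, ℓ i ≤ m} :=
  Finite.of_injective _ (funSumLeEmbSym ι m).injective

theorem Nat.card_fun_sum_le_le_choose (ι : Type*) [Fintype ι] [DecidableEq ι] (m : ℕ) :
    Nat.card {ℓ : ι → ℕ // ∑ i, ℓ i ≤ m} ≤ (m + Fintype.card ι).choose (Fintype.card ι) := by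
  calc Nat.card _ ≤ Nat.card (Sym (Option ι) m) :=
        Nat.card_le_card_of_injective _ (funSumLeEmbSym ι m).injective
    _ = (m + Fintype.card ι).choose (Fintype.card ι) := by
      rw [Nat.card_eq_fintype_card, Sym.card_sym_eq_choose, Fintype.card_option,
        show Fintype.card ι + 1 + m - 1 = m + Fintype.card ι by omega, Nat.choose_symm_add]

theorem Nat.cast_choose_le_prod_range_div_factorial {N j : ℕ} {x : ℝ} (hj : j ≤ N)
    (hx : (N : ℝ) ≤ x) : (N.choose j : ℝ) ≤ (∏ i ∈ range j, (x - i)) / j.factorial := by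
  rw [le_div_iff₀ (by positivity), ← Nat.cast_mul, mul_comm,
    ← Nat.descFactorial_eq_factorial_mul_choose, ← descPochhammer_eval_eq_descFactorial,
    descPochhammer_eval_eq_prod_range]
  refine prod_le_prod (fun i hi => ?_) (fun i _ => by linarith)
  have : (i : ℝ) < N := by exact_mod_cast (mem_range.1 hi).trans_le hj
  linarith

theorem Nat.cast_choose_add_le_prod_div_factorial {m k : ℕ} {x : ℝ} (hm : (m : ℝ) ≤ x) :
    ((m + k).choose k : ℝ) ≤ (∏ i ∈ range (k + 1), (x + k + 1 - i)) / (k + 1).factorial := by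
  refine le_trans ?_ (Nat.cast_choose_le_prod_range_div_factorial (N := m + k + 1)
    (Nat.succ_le_succ (Nat.le_add_left k m)) (by push_cast; linarith))
  rw [Nat.choose_succ_succ]
  exact_mod_cast Nat.le_add_right _ _

theorem pow_div_le_rpow_mul_pow {q : ℝ} (hq : 1 ≤ q) (n : ℕ) {c : ℕ} (hc : c ≠ 0) :
    q ^ (n / c) ≤ q ^ ((n : ℝ) * (1 - c) / c) * q ^ n := by
  rw [← Real.rpow_natCast q n, ← Real.rpow_add (by linarith), ← Real.rpow_natCast]
  refine Real.rpow_le_rpow_of_exponent_le hq ?_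
  have : (n : ℝ) * (1 - c) / c + n = n / c := by field_simp; ring
  rw [this]
  exact Nat.cast_div_le

section Instances

variable {α σ : Type*} [DecidableEq α]

theorem sum_length_le_div_of_le_count {V : List α} {c : ℕ} (hc : 0 < c)
    (hcount : ∀ a ∈ V, c ≤ V.count a) (φ : α → List σ) :
    ∑ a ∈ V.toFinset, (φ a).length ≤ (V.map φ).flatten.length / c := by
  rw [Nat.le_div_iff_mul_le hc, List.length_flatten_map_eq_sum_count, sum_mul]
  refine sum_le_sum fun a ha => ?_
  rw [mul_comm]
  exact Nat.mul_le_mul_right _ (hcount a (List.mem_toFinset.1 ha))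

variable (σ) in
theorem card_instances_le [Fintype σ] [Nonempty σ] {V : List α} {c : ℕ} (hc : 0 < c)
    (hcount : ∀ a ∈ V, c ≤ V.count a) (n : ℕ) :
    Nat.card {w : Fin n → σ // IsInstance V (List.ofFn w)} ≤
      (n / c + V.toFinset.card).choose V.toFinset.card * Fintype.card σ ^ (n / c) := by
  set A := V.toFinset
  set Inst := {w : Fin n → σ // IsInstance V (List.ofFn w)}
  have hsum (w : Inst) : ∑ a ∈ A, (w.2.choose a).length ≤ n / c := by
    simpa [← w.2.choose_spec.2] using sum_length_le_div_of_le_count hc hcount w.2.choose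
  have hcat (w : Inst) :
      (A.toList.map w.2.choose).flatten.length = ∑ a ∈ A, (w.2.choose a).length := by
    rw [List.length_flatten, List.map_map]
    exact sum_map_toList A _
  -- an instance is encoded by the lengths of the images of the distinct letters and by their
  -- concatenation, padded with an arbitrary letter `z` to length `n / c`
  let z : σ := Classical.arbitrary σ
  let code : Inst → {ℓ : A → ℕ // ∑ a, ℓ a ≤ n / c} × (Fin (n / c) → σ) := fun w =>
    (⟨fun a => (w.2.choose a).length,
      (sum_coe_sort A fun a => (w.2.choose a).length).trans_le (hsum w)⟩,
      fun i => (A.toList.map w.2.choose).flatten.getD i z)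
  have hcode : code.Injective := by
    intro w w' h
    simp only [code, Prod.mk.injEq, Subtype.mk.injEq, funext_iff] at h
    have hlen (a) (ha : a ∈ A) : (w.2.choose a).length = (w'.2.choose a).length := h.1 ⟨a, ha⟩
    have himages : ∀ a ∈ V, w.2.choose a = w'.2.choose a := by
      intro a ha
      refine List.eq_of_flatten_map_eq (fun b hb => hlen b (mem_toList.1 hb))
        (List.eq_of_getD_eq z ?_ ((hcat w).trans_le (hsum w)) fun i hi => h.2 ⟨i, hi⟩) a
        (mem_toList.2 (List.mem_toFinset.2 ha))
      rw [hcat, hcat]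
      exact sum_congr rfl hlen
    apply Subtype.ext (List.ofFn_injective _)
    rw [w.2.choose_spec.2, w'.2.choose_spec.2, List.map_congr_left himages]
  calc Nat.card Inst ≤ Nat.card ({ℓ : A → ℕ // ∑ a, ℓ a ≤ n / c} × (Fin (n / c) → σ)) :=
        Nat.card_le_card_of_injective code hcode
    _ ≤ _ := by
      rw [Nat.card_prod, Nat.card_fun, Nat.card_fin, Nat.card_eq_fintype_card (α := σ)]
      gcongr
      simpa using Nat.card_fun_sum_le_le_choose A (n / c)

theorem instProb_le_choose_mul_rpow [Fintype σ] {V : List α} {c : ℕ} (hc : 0 < c)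
    (hcount : ∀ a ∈ V, c ≤ V.count a) {n : ℕ} (hn : n ≠ 0) :
    instProb V σ n ≤ ((n / c + V.toFinset.card).choose V.toFinset.card : ℝ) *
      (Fintype.card σ : ℝ) ^ ((n : ℝ) * (1 - c) / c) := by
  rcases Nat.eq_zero_or_pos (Fintype.card σ) with hq | hq
  · rw [instProb, hq, Nat.cast_zero, zero_pow hn, div_zero]
    positivity
  have : Nonempty σ := Fintype.card_pos_iff.1 hq
  rw [instProb, div_le_iff₀ (by positivity), mul_assoc]
  calc (Nat.card {w : Fin n → σ // IsInstance V (List.ofFn w)} : ℝ)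
      ≤ ((n / c + V.toFinset.card).choose V.toFinset.card : ℝ) *
          (Fintype.card σ : ℝ) ^ (n / c) := by
        exact_mod_cast card_instances_le σ hc hcount n
    _ ≤ _ := by
        gcongr
        exact pow_div_le_rpow_mul_pow (by exact_mod_cast hq) n hc.ne'

end Instances

theorem stmt13_general {α σ : Type*} [DecidableEq α] [Fintype σ] (V : List α)
    (k r d : ℕ)
    (hk : k = V.toFinset.card)
    (hr : (∀ a ∈ V, r ≤ V.count a) ∧ ∃ a ∈ V, V.count a = r)
    (hd : d = V.toFinset.gcd fun a => V.count a) :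
    ∀ n : ℕ, 1 ≤ n →
      instProb V σ n ≤
        ((∏ i ∈ Finset.range (k + 1), ((n : ℝ) / d + k + 1 - i)) / (Nat.factorial (k + 1))) *
          (Fintype.card σ : ℝ) ^ ((n : ℝ) * (1 - (r : ℝ)) / r) := by
  intro n hn
  obtain ⟨hrle, a, ha, rfl⟩ := hr
  subst hk hd
  have hr0 : 0 < V.count a := List.count_pos_iff.2 ha
  have hdvd := gcd_dvd (f := fun a => V.count a) (List.mem_toFinset.2 ha)
  have hnr : ((n / V.count a : ℕ) : ℝ) ≤ n / (V.toFinset.gcd fun a => V.count a) :=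
    Nat.cast_div_le.trans <| div_le_div_of_nonneg_left n.cast_nonneg
      (by exact_mod_cast Nat.pos_of_dvd_of_pos hdvd hr0) (by exact_mod_cast Nat.le_of_dvd hr0 hdvd)
  exact (instProb_le_choose_mul_rpow hr0 hrle (by omega)).trans <|
    mul_le_mul_of_nonneg_right (Nat.cast_choose_add_le_prod_div_factorial hnr) (by positivity)

/-- Let `V` be a doubled word with exactly `k` distinct letters, minimal letter
multiplicity `r`, gcd of multiplicities `d`, and let `|Σ| = q ≥ 2`. Then for all
`n ≥ 1`, `I_n(V,Σ) ≤ C(n/d + k + 1, k + 1) q^{n(1-r)/r}`, where the binomial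
coefficient is the generalized one, `∏_{i=0}^{k} (n/d + k + 1 - i) / (k+1)!`. -/
theorem stmt13 {α σ : Type*} [DecidableEq α] [Fintype σ] (V : List α)
    (hdbl : Doubled V) (k r d : ℕ)
    (hk : k = V.toFinset.card)
    (hr : (∀ a ∈ V, r ≤ V.count a) ∧ ∃ a ∈ V, V.count a = r)
    (hd : d = V.toFinset.gcd fun a => V.count a)
    (hq : 2 ≤ Fintype.card σ) :
    ∀ n : ℕ, 1 ≤ n →
      instProb V σ n ≤
        ((∏ i ∈ Finset.range (k + 1), ((n : ℝ) / d + k + 1 - i)) / (Nat.factorial (k + 1))) *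
          (Fintype.card σ : ℝ) ^ ((n : ℝ) * (1 - (r : ℝ)) / r) :=
  stmt13_general V k r d hk hr hd
end

section
/- Let V be a doubled word, Σ a finite alphabet with q ≥ 2 letters, and W_n ∈ Σ^n chosen uniformly at random. Then for every positive integer p, the p-th central moment satisfies E(|δ(V,W_n) − E(δ(V,W_n))|^p) = O((log(n)/n)^p). -/
open Filter Asymptotics

/-!
A doubled word `V` with `k` distinct letters has at most `(m + 1)^k q^(m/2)` instances of
length `m`: an instance `φ(V)` is determined by the lengths of the `φ a` together with the
concatenation of the `φ a` over the distinct letters, and since each letter occurs twice in `V`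
that concatenation has length at most `m / 2`. A union bound over the windows of a random word
of length `n` then shows that some substring longer than `L = 2 (k + p + 3) ⌈log₂ (n + 2)⌉` is
an instance with probability `β ≤ (n + 2)^(-(p+1))`. Off that event only the at most `(n + 1) L`
short substrings can be instances, so `δ ≤ 2L/n = O(log n / n)`; as `0 ≤ δ ≤ 1` always, the
`p`-th central moment is at most `(2L/n + β)^p + β = O((log n / n)^p)`.
-/

open Finset

theorem sum_abs_sub_mean_pow_le {ι : Type*} [Fintype ι] (f : ι → ℝ) (B : Finset ι) (p : ℕ)
    {s : ℝ} (hs : 0 ≤ s) (hf0 : ∀ i, 0 ≤ f i) (hf1 : ∀ i, f i ≤ 1) (hfs : ∀ i ∉ B, f i ≤ s) :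
    (∑ i, |f i - (∑ j, f j) / Fintype.card ι| ^ p) / Fintype.card ι ≤
      (s + #B / Fintype.card ι) ^ p + #B / Fintype.card ι := by
  classical
  rcases (Fintype.card ι).eq_zero_or_pos with hN | hN
  · simp only [hN, Nat.cast_zero, div_zero, add_zero]
    positivity
  set N : ℝ := ((Fintype.card ι : ℕ) : ℝ)
  set β : ℝ := #B / N
  set μ : ℝ := (∑ j, f j) / N
  have hN' : (0 : ℝ) < N := Nat.cast_pos.mpr hN
  have hβ : 0 ≤ β := by positivity
  have hindicator : ∑ i, (if i ∈ B then (1 : ℝ) else 0) = #B := by simp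
  have hμ0 : 0 ≤ μ := div_nonneg (sum_nonneg fun j _ => hf0 j) hN'.le
  have hμ1 : μ ≤ 1 := by
    refine div_le_one_of_le₀ ?_ hN'.le
    simpa [N] using sum_le_sum fun j (_ : j ∈ univ) => hf1 j
  have hμs : μ ≤ s + β := by
    rw [div_le_iff₀ hN']
    calc ∑ j, f j ≤ ∑ j, (s + if j ∈ B then 1 else 0) := by
          refine sum_le_sum fun j _ => ?_
          split_ifs with hj
          · linarith [hf1 j]
          · linarith [hfs j hj]
      _ = (s + β) * N := by
          rw [sum_add_distrib, hindicator, sum_const, card_univ, nsmul_eq_mul,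
            add_mul, div_mul_cancel₀ _ hN'.ne', mul_comm]
  have hpoint : ∀ i, |f i - μ| ^ p ≤ (s + β) ^ p + if i ∈ B then 1 else 0 := by
    intro i
    by_cases hi : i ∈ B
    · rw [if_pos hi]
      have : |f i - μ| ≤ 1 := abs_le.mpr ⟨by linarith [hf0 i], by linarith [hf1 i]⟩
      exact (pow_le_one₀ (abs_nonneg _) this).trans (le_add_of_nonneg_left (by positivity))
    · rw [if_neg hi, add_zero]
      exact pow_le_pow_left₀ (abs_nonneg _)
        (abs_le.mpr ⟨by linarith [hf0 i], by linarith [hfs i hi]⟩) p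
  rw [div_le_iff₀ hN']
  calc ∑ i, |f i - μ| ^ p ≤ ∑ i, ((s + β) ^ p + if i ∈ B then 1 else 0) :=
        sum_le_sum fun i _ => hpoint i
    _ = ((s + β) ^ p + β) * N := by
        rw [sum_add_distrib, hindicator, sum_const, card_univ, nsmul_eq_mul,
          add_mul, div_mul_cancel₀ _ hN'.ne', mul_comm]

theorem List.eq_of_flatten_map_eq_of_length_eq {α β : Type*} {l : List α} {φ ψ : α → List β}
    (hlen : ∀ a ∈ l, (φ a).length = (ψ a).length)
    (h : (l.map φ).flatten = (l.map ψ).flatten) : ∀ a ∈ l, φ a = ψ a := by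
  induction l with
  | nil => simp
  | cons b l ih =>
    simp only [List.map_cons, List.flatten_cons] at h
    obtain ⟨hb, hl⟩ := List.append_inj h (hlen b List.mem_cons_self)
    simpa [hb] using ih (fun a ha => hlen a (List.mem_cons_of_mem _ ha)) hl

theorem Doubled.two_mul_sum_length_le {α β : Type*} [DecidableEq α] {V : List α}
    (hV : Doubled V) (φ : α → List β) :
    2 * ∑ a ∈ V.toFinset, (φ a).length ≤ ((V.map φ).flatten).length := by
  rw [List.length_flatten, List.map_map, Finset.sum_list_map_count, Finset.mul_sum]
  exact sum_le_sum fun a ha => by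
    simpa using Nat.mul_le_mul_right _ (hV a (List.mem_toFinset.mp ha))

theorem Doubled.flatten_map_eq_of_getD_eq {α β : Type*} [DecidableEq α] {V : List α}
    (hV : Doubled V) {φ ψ : α → List β} (x₀ : β) {m : ℕ} (hφ : ((V.map φ).flatten).length = m)
    (hlen : ∀ a ∈ V, (φ a).length = (ψ a).length)
    (hget : ∀ t < m / 2, ((V.toFinset.toList.map φ).flatten).getD t x₀ =
      ((V.toFinset.toList.map ψ).flatten).getD t x₀) :
    (V.map φ).flatten = (V.map ψ).flatten := by
  have hlength : ∀ χ : α → List β,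
      ((V.toFinset.toList.map χ).flatten).length = ∑ a ∈ V.toFinset, (χ a).length := by
    intro χ
    rw [List.length_flatten, List.map_map]
    exact sum_map_toList _ _
  have hsum : ∑ a ∈ V.toFinset, (φ a).length = ∑ a ∈ V.toFinset, (ψ a).length :=
    sum_congr rfl fun a ha => hlen a (List.mem_toFinset.mp ha)
  have hshort := hV.two_mul_sum_length_le φ
  have hconcat : (V.toFinset.toList.map φ).flatten = (V.toFinset.toList.map ψ).flatten := by
    refine List.ext_getElem (by rw [hlength, hlength, hsum]) fun t h₁ h₂ => ?_
    have := hget t (by rw [hlength] at h₁; omega)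
    rwa [List.getD_eq_getElem _ _ h₁, List.getD_eq_getElem _ _ h₂] at this
  have hletters := List.eq_of_flatten_map_eq_of_length_eq
    (fun a ha => hlen a (List.mem_toFinset.mp (mem_toList.mp ha))) hconcat
  rw [List.map_congr_left fun a ha => hletters a (mem_toList.mpr (List.mem_toFinset.mpr ha))]

open Classical in
theorem card_filter_isInstance_le {α σ : Type*} [DecidableEq α] [Fintype σ] [Nonempty σ]
    {V : List α} (hV : Doubled V) (m : ℕ) :
    #{w : Fin m → σ | IsInstance V (List.ofFn w)} ≤
      (m + 1) ^ #V.toFinset * Fintype.card σ ^ (m / 2) := by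
  obtain ⟨x₀⟩ := ‹Nonempty σ›
  let φ (w : Fin m → σ) : α → List σ :=
    if h : IsInstance V (List.ofFn w) then h.choose else fun _ => []
  have hφ : ∀ w, IsInstance V (List.ofFn w) → List.ofFn w = (V.map (φ w)).flatten := by
    intro w h
    simpa only [φ, dif_pos h] using h.choose_spec.2
  let code (w : Fin m → σ) : (V.toFinset → ℕ) × (Fin (m / 2) → σ) :=
    (fun a => (φ w a).length, fun t => ((V.toFinset.toList.map (φ w)).flatten).getD t x₀)
  have hmaps : ∀ w ∈ ({w | IsInstance V (List.ofFn w)} : Finset (Fin m → σ)),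
      code w ∈ Fintype.piFinset (fun _ => range (m + 1)) ×ˢ univ := by
    intro w hw
    simp only [mem_filter, mem_univ, true_and] at hw
    simp only [code, mem_product, Fintype.mem_piFinset, mem_range, mem_univ, and_true]
    intro a
    have := (List.sublist_flatten_of_mem
      (List.mem_map_of_mem (f := φ w) (List.mem_toFinset.mp a.2))).length_le
    rw [← hφ w hw, List.length_ofFn] at this
    omega
  have hinj : Set.InjOn code ({w | IsInstance V (List.ofFn w)} : Finset (Fin m → σ)) := by
    intro w₁ h₁ w₂ h₂ heq
    simp only [coe_filter, mem_univ, true_and, Set.mem_ofPred_eq] at h₁ h₂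
    simp only [code, Prod.mk.injEq, funext_iff] at heq
    refine List.ofFn_injective ?_
    rw [hφ w₁ h₁, hφ w₂ h₂]
    refine hV.flatten_map_eq_of_getD_eq x₀ (by rw [← hφ w₁ h₁, List.length_ofFn])
      (fun a ha => heq.1 ⟨a, List.mem_toFinset.mpr ha⟩) fun t ht => heq.2 ⟨t, ht⟩
  calc _ ≤ #(Fintype.piFinset (fun _ : V.toFinset => range (m + 1)) ×ˢ
        (univ : Finset (Fin (m / 2) → σ))) := card_le_card_of_injOn code hmaps hinj
    _ = _ := by simp

theorem subword_ofFn {σ : Type*} {n i j : ℕ} (hj : j ≤ n) (w : Fin n → σ) :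
    subword (List.ofFn w) i j = List.ofFn fun t : Fin (j - i) => w ⟨i + t, by omega⟩ := by
  refine List.ext_getElem ?_ fun t _ _ => ?_
  · simp only [subword, List.length_take, List.length_drop, List.length_ofFn]
    omega
  · simp only [subword, List.getElem_take, List.getElem_drop, List.getElem_ofFn]

open Classical in
theorem card_filter_subword_le {σ : Type*} [Fintype σ] (P : List σ → Prop) {n i j : ℕ}
    (hj : j ≤ n) :
    #{w : Fin n → σ | P (subword (List.ofFn w) i j)} ≤
      #{v : Fin (j - i) → σ | P (List.ofFn v)} * Fintype.card σ ^ (n - (j - i)) := by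
  let split (w : Fin n → σ) : (Fin (j - i) → σ) × (Fin (n - (j - i)) → σ) :=
    (fun t => w ⟨i + t, by omega⟩,
     fun t => if (t : ℕ) < i then w ⟨t, by omega⟩ else w ⟨t + (j - i), by omega⟩)
  have hmaps : ∀ w ∈ ({w | P (subword (List.ofFn w) i j)} : Finset (Fin n → σ)),
      split w ∈ ({v | P (List.ofFn v)} : Finset (Fin (j - i) → σ)) ×ˢ univ := by
    intro w hw
    simp only [mem_filter, mem_univ, true_and, subword_ofFn hj] at hw
    simpa [split] using hw
  have hinj : Set.InjOn split ({w | P (subword (List.ofFn w) i j)} : Finset (Fin n → σ)) := by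
    intro w₁ _ w₂ _ heq
    simp only [split, Prod.mk.injEq, funext_iff] at heq
    obtain ⟨hwindow, hrest⟩ := heq
    funext s
    by_cases hsi : (s : ℕ) < i
    · simpa [hsi] using hrest ⟨s, by omega⟩
    by_cases hsj : (s : ℕ) < j
    · simpa [Nat.add_sub_cancel' (not_lt.mp hsi)] using hwindow ⟨s - i, by omega⟩
    · have := hrest ⟨s - (j - i), by omega⟩
      simp only [show ¬ (s : ℕ) - (j - i) < i by omega, if_false,
        Nat.sub_add_cancel (show j - i ≤ (s : ℕ) by omega)] at this
      exact this
  calc _ ≤ _ := card_le_card_of_injOn split hmaps hinj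
    _ = _ := by simp

def HasLongInstance {α β : Type*} (V : List α) (L : ℕ) (W : List β) : Prop :=
  ∃ i j, j ≤ W.length ∧ L < j - i ∧ IsInstance V (subword W i j)

open Classical in
theorem card_filter_hasLongInstance_mul_le {α σ : Type*} [DecidableEq α] [Fintype σ]
    {V : List α} (hV : Doubled V) (hq : 2 ≤ Fintype.card σ) (L n : ℕ) :
    #{w : Fin n → σ | HasLongInstance V L (List.ofFn w)} * 2 ^ (L / 2) ≤
      (n + 1) ^ (#V.toFinset + 2) * Fintype.card σ ^ n := by
  have : Nonempty σ := Fintype.card_pos_iff.mp (by omega)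
  set k := #V.toFinset
  set q := Fintype.card σ
  set long := {x ∈ range (n + 1) ×ˢ range (n + 1) | L < x.2 - x.1}
  have hwindow : ∀ x ∈ long,
      #{w : Fin n → σ | IsInstance V (subword (List.ofFn w) x.1 x.2)} * 2 ^ (L / 2) ≤
        (n + 1) ^ k * q ^ n := by
    intro x hx
    simp only [long, mem_filter, mem_product, mem_range] at hx
    set m := x.2 - x.1
    have hhalf : 2 ^ (L / 2) ≤ q ^ (m - m / 2) :=
      (Nat.pow_le_pow_right two_pos (by omega)).trans (Nat.pow_le_pow_left hq _)
    calc _ ≤ (m + 1) ^ k * q ^ (m / 2) * q ^ (n - m) * q ^ (m - m / 2) :=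
          Nat.mul_le_mul ((card_filter_subword_le _ (by omega)).trans
            (Nat.mul_le_mul_right _ (card_filter_isInstance_le hV m))) hhalf
      _ = (m + 1) ^ k * q ^ n := by
          rw [mul_assoc, mul_assoc, ← pow_add, ← pow_add]
          congr 2
          omega
      _ ≤ (n + 1) ^ k * q ^ n := by gcongr; omega
  have hunion : #{w : Fin n → σ | HasLongInstance V L (List.ofFn w)} ≤
      ∑ x ∈ long, #{w : Fin n → σ | IsInstance V (subword (List.ofFn w) x.1 x.2)} := by
    refine (card_le_card fun w hw => ?_).trans card_biUnion_le
    obtain ⟨i, j, hj, hlong, hinst⟩ := (mem_filter.mp hw).2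
    simp only [List.length_ofFn] at hj
    exact mem_biUnion.mpr ⟨(i, j), by simp [long]; omega, by simpa using hinst⟩
  have hlong : #long ≤ (n + 1) ^ 2 := (card_filter_le _ _).trans (by simp [sq])
  calc _ ≤ ∑ x ∈ long,
        #{w : Fin n → σ | IsInstance V (subword (List.ofFn w) x.1 x.2)} * 2 ^ (L / 2) := by
        rw [← sum_mul]
        exact Nat.mul_le_mul_right _ hunion
    _ ≤ #long * ((n + 1) ^ k * q ^ n) := by
        rw [← smul_eq_mul, ← sum_const]
        exact sum_le_sum hwindow
    _ ≤ (n + 1) ^ 2 * ((n + 1) ^ k * q ^ n) := Nat.mul_le_mul_right _ hlong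
    _ = (n + 1) ^ (k + 2) * q ^ n := by ring

open Classical in
theorem card_filter_hasLongInstance_mul_le_pow {α σ : Type*} [DecidableEq α] [Fintype σ]
    {V : List α} (hV : Doubled V) (hq : 2 ≤ Fintype.card σ) (p n : ℕ) :
    #{w : Fin n → σ |
        HasLongInstance V (2 * (#V.toFinset + p + 3) * Nat.clog 2 (n + 2)) (List.ofFn w)} *
      (n + 2) ^ (p + 1) ≤ Fintype.card σ ^ n := by
  set k := #V.toFinset
  set N := #{w : Fin n → σ |
    HasLongInstance V (2 * (k + p + 3) * Nat.clog 2 (n + 2)) (List.ofFn w)}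
  have hcount := card_filter_hasLongInstance_mul_le hV hq (2 * (k + p + 3) * Nat.clog 2 (n + 2)) n
  have hcut : (n + 2) ^ (k + p + 3) ≤ 2 ^ (2 * (k + p + 3) * Nat.clog 2 (n + 2) / 2) := by
    rw [mul_assoc, Nat.mul_div_cancel_left _ two_pos, mul_comm, pow_mul]
    exact Nat.pow_le_pow_left (Nat.le_pow_clog one_lt_two _) _
  refine Nat.le_of_mul_le_mul_right (c := (n + 2) ^ (k + 2)) ?_ (by positivity)
  calc N * (n + 2) ^ (p + 1) * (n + 2) ^ (k + 2) = N * (n + 2) ^ (k + p + 3) := by ring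
    _ ≤ (n + 1) ^ (k + 2) * Fintype.card σ ^ n := (Nat.mul_le_mul_left _ hcut).trans hcount
    _ ≤ Fintype.card σ ^ n * (n + 2) ^ (k + 2) := by
        rw [mul_comm]
        gcongr
        omega

theorem one_le_log_of_three_le {n : ℕ} (hn : 3 ≤ n) : 1 ≤ Real.log n := by
  rw [Real.le_log_iff_exp_le (by positivity)]
  calc Real.exp 1 ≤ 3 := (Real.exp_one_lt_d9.trans (by norm_num)).le
    _ ≤ n := by exact_mod_cast hn

theorem clog_two_le_log {n : ℕ} (hn : 3 ≤ n) : (Nat.clog 2 (n + 2) : ℝ) ≤ 5 * Real.log n := by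
  have hlog := one_le_log_of_three_le hn
  have hn2 : ((n + 2 : ℕ) : ℝ) ≤ (n : ℝ) ^ 2 := by
    push_cast
    nlinarith [(show (3 : ℝ) ≤ n by exact_mod_cast hn)]
  have hlogb : Real.logb 2 (n + 2 : ℕ) ≤ 3 * Real.log n := by
    rw [Real.logb, div_le_iff₀ (Real.log_pos one_lt_two)]
    calc Real.log (n + 2 : ℕ) ≤ Real.log ((n : ℝ) ^ 2) := Real.log_le_log (by positivity) hn2
      _ = 2 * Real.log n := by rw [Real.log_pow]; norm_num
      _ ≤ 3 * Real.log n * Real.log 2 := by nlinarith [Real.log_two_gt_d9]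
  rw [← Real.natCeil_logb_natCast]
  calc (⌈Real.logb 2 (n + 2 : ℕ)⌉₊ : ℝ) ≤ Real.logb 2 (n + 2 : ℕ) + 1 :=
        (Nat.ceil_lt_add_one (Real.logb_nonneg one_lt_two (by norm_cast; omega))).le
    _ ≤ 5 * Real.log n := by linarith

theorem isBigO_clog_two_div :
    (fun n : ℕ => (Nat.clog 2 (n + 2) : ℝ) / n) =O[atTop] fun n => Real.log n / n := by
  refine IsBigO.of_bound 5 ?_
  filter_upwards [eventually_ge_atTop 3] with n hn
  rw [Real.norm_of_nonneg (by positivity), Real.norm_of_nonneg (by positivity), mul_div_assoc']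
  exact div_le_div_of_nonneg_right (clog_two_le_log hn) (Nat.cast_nonneg n)

theorem isBigO_inv_add_two_pow {p q : ℕ} (hq : q ≤ p + 1) :
    (fun n : ℕ => (((n : ℝ) + 2) ^ (p + 1))⁻¹) =O[atTop] fun n => (Real.log n / n) ^ q := by
  refine IsBigO.of_bound 1 ?_
  filter_upwards [eventually_ge_atTop 3] with n hn
  have hlog := one_le_log_of_three_le hn
  have hn' : (1 : ℝ) ≤ n := by exact_mod_cast (show 1 ≤ n by omega)
  rw [Real.norm_of_nonneg (by positivity), Real.norm_of_nonneg (by positivity), one_mul,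
    ← inv_pow]
  calc (((n : ℝ) + 2)⁻¹) ^ (p + 1) ≤ ((n : ℝ)⁻¹) ^ (p + 1) := by gcongr; linarith
    _ ≤ ((n : ℝ)⁻¹) ^ q := pow_le_pow_of_le_one (by positivity) (inv_le_one_of_one_le₀ hn') hq
    _ ≤ (Real.log n / n) ^ q := by
        gcongr
        rw [inv_eq_one_div]
        gcongr

theorem density_nonneg {α β : Type*} (V : List α) (W : List β) : 0 ≤ density V W := by
  unfold density
  positivity

theorem density_le_one {α β : Type*} (V : List α) (W : List β) : density V W ≤ 1 := by
  classical
  unfold density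
  refine div_le_one_of_le₀ ?_ (Nat.cast_nonneg _)
  have hpairs := card_product_filter_lt (s := range (W.length + 1))
  rw [card_range] at hpairs
  rw [Nat.cast_le, ← hpairs]
  exact card_le_card fun x hx => by
    simp only [mem_filter] at hx ⊢
    exact ⟨hx.1, hx.2.1⟩

theorem card_filter_lt_and_sub_le (n L : ℕ) :
    #{x ∈ range (n + 1) ×ˢ range (n + 1) | x.1 < x.2 ∧ x.2 - x.1 ≤ L} ≤ (n + 1) * L := by
  calc _ ≤ #(range (n + 1) ×ˢ range L) :=
        card_le_card_of_injOn (fun x => (x.2, x.2 - x.1 - 1))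
          (fun x hx => by simp at hx ⊢; omega)
          (fun x hx y hy hxy => by
            simp only [coe_filter, mem_product, mem_range, Prod.mk.injEq, Set.mem_ofPred_eq]
              at hx hy hxy
            ext <;> omega)
    _ = (n + 1) * L := by simp

theorem density_le_of_not_hasLongInstance {α β : Type*} {V : List α} {W : List β} {L : ℕ}
    (h : ¬HasLongInstance V L W) : density V W ≤ 2 * L / W.length := by
  classical
  unfold density
  set n := W.length
  have hcount : #{x ∈ range (n + 1) ×ˢ range (n + 1) |
      x.1 < x.2 ∧ IsInstance V (subword W x.1 x.2)} ≤ (n + 1) * L := by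
    refine le_trans (card_le_card fun x hx => ?_) (card_filter_lt_and_sub_le n L)
    simp only [mem_filter, mem_product, mem_range] at hx ⊢
    obtain ⟨hx, hlt, hinst⟩ := hx
    exact ⟨hx, hlt, not_lt.mp fun hlong => h ⟨x.1, x.2, by omega, hlong, hinst⟩⟩
  rw [Nat.cast_choose_two]
  push_cast
  rw [add_sub_cancel_right]
  rcases n.eq_zero_or_pos with hn | hn
  · simp [hn]
  calc _ ≤ ((n + 1) * L : ℝ) / ((n + 1) * n / 2) := by
        gcongr
        exact_mod_cast hcount
    _ = 2 * L / n := by field_simp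

open Classical in
theorem sum_abs_density_sub_expDensity_pow_le {α σ : Type*} [Fintype σ] (V : List α)
    (L n p : ℕ) :
    (∑ w : Fin n → σ, |density V (List.ofFn w) - expDensity V σ n| ^ p) /
        (Fintype.card σ : ℝ) ^ n ≤
      (2 * L / n + #{w : Fin n → σ | HasLongInstance V L (List.ofFn w)} /
          (Fintype.card σ : ℝ) ^ n) ^ p +
        #{w : Fin n → σ | HasLongInstance V L (List.ofFn w)} / (Fintype.card σ : ℝ) ^ n := by
  have hcard : (Fintype.card (Fin n → σ) : ℝ) = (Fintype.card σ : ℝ) ^ n := by simp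
  have h := sum_abs_sub_mean_pow_le (fun w : Fin n → σ => density V (List.ofFn w))
    {w | HasLongInstance V L (List.ofFn w)} p (s := 2 * L / n) (by positivity)
    (fun _ => density_nonneg _ _) (fun _ => density_le_one _ _) fun w hw =>
      (density_le_of_not_hasLongInstance (by simpa using hw)).trans_eq
        (by rw [List.length_ofFn])
  rw [hcard] at h
  exact h

theorem stmt17_general {α σ : Type*} [DecidableEq α] [Fintype σ] (V : List α)
    (hdbl : Doubled V) (hq : 2 ≤ Fintype.card σ) (p : ℕ) :
    (fun n : ℕ =>
        (∑ w : Fin n → σ, |density V (List.ofFn w) - expDensity V σ n| ^ p) /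
          (Fintype.card σ : ℝ) ^ n)
      =O[atTop] (fun n : ℕ => (Real.log n / n) ^ p) := by
  classical
  set e := #V.toFinset + p + 3
  let L (n : ℕ) : ℕ := 2 * e * Nat.clog 2 (n + 2)
  let β (n : ℕ) : ℝ :=
    #{w : Fin n → σ | HasLongInstance V (L n) (List.ofFn w)} / (Fintype.card σ : ℝ) ^ n
  have hβ : β =O[atTop] fun n : ℕ => (((n : ℝ) + 2) ^ (p + 1))⁻¹ := by
    refine isBigO_of_le _ fun n => ?_
    rw [Real.norm_of_nonneg (by positivity), Real.norm_of_nonneg (by positivity),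
      div_le_iff₀ (by positivity), inv_mul_eq_div, le_div_iff₀ (by positivity)]
    exact_mod_cast card_filter_hasLongInstance_mul_le_pow hdbl hq p n
  have hL : (fun n : ℕ => (2 * L n / n : ℝ)) =O[atTop] fun n => Real.log n / n :=
    (isBigO_clog_two_div.const_mul_left (4 * e)).congr_left fun n => by
      simp only [L]
      push_cast
      ring
  have hbound : (fun n : ℕ => (2 * L n / n + β n) ^ p + β n) =O[atTop]
      fun n => (Real.log n / n) ^ p :=
    ((hL.add ((hβ.trans (isBigO_inv_add_two_pow (q := 1) (by omega))).congr_right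
      (by simp))).pow p).add (hβ.trans (isBigO_inv_add_two_pow (by omega)))
  refine (isBigO_of_le _ fun n => ?_).trans hbound
  rw [Real.norm_of_nonneg (by positivity), Real.norm_of_nonneg (by positivity)]
  exact sum_abs_density_sub_expDensity_pow_le V (L n) n p

/-- For a doubled word `V`, `|Σ| = q ≥ 2`, and any positive integer `p`, the
`p`-th central moment satisfies `E(|δ(V,W_n) - E(δ(V,W_n))|^p) = O((log n / n)^p)`. -/
theorem stmt17 {α σ : Type*} [DecidableEq α] [Fintype σ] (V : List α)
    (hdbl : Doubled V) (hq : 2 ≤ Fintype.card σ) (p : ℕ) (hp : 0 < p) :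
    (fun n : ℕ =>
        (∑ w : Fin n → σ, |density V (List.ofFn w) - expDensity V σ n| ^ p) /
          (Fintype.card σ : ℝ) ^ n)
      =O[atTop] (fun n : ℕ => (Real.log n / n) ^ p) :=
  stmt17_general V hdbl hq p
end
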